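/- arXiv:1808.05944 — 12 statements merged into one kernel-verified Lean document; each statement's English description precedes it below -/
import Mathlib

section
/- Let M_n = 2·(2n)!·3^n / ((n+2)!·n!) be the number of rooted planar maps with n edges (Tutte's formula). Then M_n ~ (2/√π)·n^{-5/2}·12^n as n → ∞; that is, the sequence M_n · n^{5/2} / 12^n converges to 2/√π. -/
/-!
Since `M_n = 2 · C(2n, n) · 3^n / ((n + 1)(n + 2))`, the normalized quantity is
`2 · (C(2n, n) · √n / 4^n) · n² / ((n + 1)(n + 2))`. Stirling's formula `n! ~ √(2πn) (n/e)^n`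
gives `C(2n, n) · √n / 4^n → 1/√π`, and the rational factor tends to `1`.
-/

open Filter Real Topology
open scoped Nat

theorem Nat.centralBinom_mul_factorial_sq (n : ℕ) : Nat.centralBinom n * n ! ^ 2 = (2 * n)! := by
  have h := Nat.choose_mul_factorial_mul_factorial (show n ≤ 2 * n by omega)
  rwa [show 2 * n - n = n by omega, mul_assoc, ← sq, ← Nat.centralBinom_eq_two_mul_choose] at h

namespace Stirling

theorem centralBinom_mul_sqrt_div_four_pow_eq (n : ℕ) :
    (Nat.centralBinom n : ℝ) * √n / 4 ^ n = stirlingSeq (2 * n) / stirlingSeq n ^ 2 := by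
  rcases n.eq_zero_or_pos with rfl | hn
  · simp
  have hn0 : (0 : ℝ) < n := by exact_mod_cast hn
  have hcb : (Nat.centralBinom n : ℝ) = (2 * n)! / (n ! : ℝ) ^ 2 := by
    rw [eq_div_iff (by positivity), ← Nat.centralBinom_mul_factorial_sq]; push_cast; rfl
  have hsqrt : √(2 * (2 * n : ℝ)) = 2 * √n := by
    rw [show 2 * (2 * n : ℝ) = 2 ^ 2 * n by ring, sqrt_mul (by positivity), sqrt_sq zero_le_two]
  have hpow : ((2 * n : ℝ) / exp 1) ^ (2 * n) = 4 ^ n * ((n / exp 1) ^ n) ^ 2 := by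
    rw [mul_div_assoc, mul_pow, pow_mul, pow_mul']; norm_num
  simp only [stirlingSeq, hcb]
  push_cast
  rw [hsqrt, hpow]
  field_simp
  rw [sq_sqrt hn0.le, sq_sqrt (by positivity)]
  ring

theorem tendsto_centralBinom_mul_sqrt_div_four_pow :
    Tendsto (fun n : ℕ => (Nat.centralBinom n : ℝ) * √n / 4 ^ n) atTop (𝓝 (1 / √π)) := by
  have hπ : √π ≠ 0 := by positivity
  have h2n : Tendsto (fun n : ℕ => stirlingSeq (2 * n)) atTop (𝓝 √π) :=
    tendsto_stirlingSeq_sqrt_pi.comp (tendsto_id.const_mul_atTop' two_pos)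
  have hlim := h2n.div (tendsto_stirlingSeq_sqrt_pi.pow 2) (pow_ne_zero 2 hπ)
  rw [sq, div_mul_cancel_left₀ hπ, ← one_div] at hlim
  exact hlim.congr fun n => (centralBinom_mul_sqrt_div_four_pow_eq n).symm

end Stirling

theorem tendsto_natCast_sq_div_add_mul_add (a b : ℝ) :
    Tendsto (fun n : ℕ => (n : ℝ) ^ 2 / ((n + a) * (n + b))) atTop (𝓝 1) := by
  have := (tendsto_natCast_div_add_atTop a).mul (tendsto_natCast_div_add_atTop b)
  rw [mul_one] at this
  refine this.congr fun n => ?_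
  rw [div_mul_div_comm, sq]

lemma tutte_count_mul_rpow_div_eq (n : ℕ) :
    (2 * ((2 * n)! : ℝ) * 3 ^ n / (((n + 2)! : ℝ) * n !)) * (n : ℝ) ^ (5 / 2 : ℝ) / 12 ^ n =
      2 * ((Nat.centralBinom n : ℝ) * √n / 4 ^ n) * ((n : ℝ) ^ 2 / ((n + 1) * (n + 2))) := by
  have h52 : (n : ℝ) ^ (5 / 2 : ℝ) = (n : ℝ) ^ 2 * √n := by
    rw [sqrt_eq_rpow, ← rpow_natCast, ← rpow_add' n.cast_nonneg (by norm_num)]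
    norm_num
  have hfac : (((n + 2)! : ℕ) : ℝ) = (n + 2) * (n + 1) * n ! := by
    rw [Nat.factorial_succ, Nat.factorial_succ]; push_cast; ring
  have hcb : ((2 * n)! : ℝ) = Nat.centralBinom n * (n ! : ℝ) ^ 2 := by
    rw [← Nat.centralBinom_mul_factorial_sq]; push_cast; rfl
  rw [h52, hfac, hcb, show (12 : ℝ) ^ n = 4 ^ n * 3 ^ n by rw [← mul_pow]; norm_num]
  field_simp

/-- Tutte's formula: the number `M_n = 2·(2n)!·3^n / ((n+2)!·n!)` of rooted planar maps
with `n` edges satisfies `M_n ~ (2/√π)·n^{-5/2}·12^n`, i.e.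
`M_n · n^{5/2} / 12^n → 2/√π`. -/
theorem tutte_asymptotics :
    Tendsto
      (fun n : ℕ =>
        (2 * (Nat.factorial (2 * n) : ℝ) * 3 ^ n /
            ((Nat.factorial (n + 2) : ℝ) * (Nat.factorial n : ℝ))) *
          (n : ℝ) ^ (5 / 2 : ℝ) / 12 ^ n)
      atTop (nhds (2 / Real.sqrt π)) := by
  have hlim := (Stirling.tendsto_centralBinom_mul_sqrt_div_four_pow.const_mul 2).mul
    (tendsto_natCast_sq_div_add_mul_add 1 2)
  rw [mul_one, mul_one_div] at hlim
  simpa only [tutte_count_mul_rpow_div_eq] using hlim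
end

section
/- Let D be a set of even positive integers such that the index set I = {i ∈ ℕ : 2i ∈ D} is infinite, and define H(x) = Σ_{i ∈ I} (i−1)·C(2i−1, i)·x^i for x ≥ 0. Then for every x with 0 ≤ x < 1/4 the family i ↦ (i−1)·C(2i−1, i)·x^i (i ∈ I) is summable, and H(x) tends to +∞ as x → 1/4 from the left. -/
open Filter Real

/-- For `x ≥ 0`, `H D x = Σ_{i : 1 ≤ i, 2i ∈ D} (i−1)·C(2i−1,i)·x^i`. -/
noncomputable def Hseries (D : Set ℕ) (x : ℝ) : ℝ :=
  ∑' i : {i : ℕ // 1 ≤ i ∧ 2 * i ∈ D},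
    (((i : ℕ) : ℝ) - 1) * (Nat.choose (2 * (i : ℕ) - 1) (i : ℕ) : ℝ) * x ^ (i : ℕ)

/-!
The coefficients `(i - 1) C(2i-1, i)` are at most `(i + 1) 4^i`, so the series converges for
`|x| < 1/4`. At `x = 1/4` the central-binomial bound `4^i ≤ 2i C(2i, i) = 4i C(2i-1, i)` makes
every term with `i ≥ 2` at least `1/8`. Since the index set is infinite, finitely many terms
already exceed any bound at `1/4`, hence by continuity also slightly to the left of `1/4`, and the
remaining terms are nonnegative there.
-/

theorem Nat.centralBinom_eq_two_mul_choose_two_mul_sub_one {n : ℕ} (hn : 0 < n) :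
    n.centralBinom = 2 * (2 * n - 1).choose n := by
  obtain ⟨m, rfl⟩ := Nat.exists_eq_add_of_le' hn
  rw [Nat.centralBinom_eq_two_mul_choose, show 2 * (m + 1) - 1 = 2 * m + 1 by omega,
    show 2 * (m + 1) = 2 * m + 1 + 1 by omega, Nat.choose_succ_succ, Nat.choose_symm_half]
  ring

theorem Nat.four_pow_le_eight_mul_sub_one_mul_choose {n : ℕ} (hn : 2 ≤ n) :
    4 ^ n ≤ 8 * (n - 1) * (2 * n - 1).choose n :=
  calc 4 ^ n ≤ 2 * n * n.centralBinom := Nat.four_pow_le_two_mul_self_mul_centralBinom n (by omega)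
    _ = 4 * n * (2 * n - 1).choose n := by
      rw [Nat.centralBinom_eq_two_mul_choose_two_mul_sub_one (by omega)]; ring
    _ ≤ 8 * (n - 1) * (2 * n - 1).choose n := Nat.mul_le_mul_right _ (by omega)

theorem Nat.choose_two_mul_sub_one_le_four_pow (n : ℕ) : (2 * n - 1).choose n ≤ 4 ^ n :=
  calc (2 * n - 1).choose n ≤ 2 ^ (2 * n - 1) := Nat.choose_le_two_pow _ _
    _ ≤ 2 ^ (2 * n) := Nat.pow_le_pow_right two_pos (by omega)
    _ = 4 ^ n := by rw [pow_mul]; norm_num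

theorem summable_sub_one_mul_choose_mul_pow {x : ℝ} (hx : |x| < 1 / 4) :
    Summable fun n : ℕ => ((n : ℝ) - 1) * ((2 * n - 1).choose n : ℝ) * x ^ n := by
  have hr : ‖4 * |x|‖ < 1 := by
    rw [norm_of_nonneg (by positivity)]; linarith
  have hmajor : Summable fun n : ℕ => ((n : ℝ) + 1) * (4 * |x|) ^ n :=
    ((summable_pow_mul_geometric_of_norm_lt_one 1 hr).add
      (summable_geometric_of_norm_lt_one hr)).congr fun n => by ring
  refine Summable.of_norm_bounded hmajor fun n => ?_
  have hchoose : ((2 * n - 1).choose n : ℝ) ≤ 4 ^ n := by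
    exact_mod_cast Nat.choose_two_mul_sub_one_le_four_pow n
  have hcoeff : |(n : ℝ) - 1| ≤ n + 1 := abs_le.mpr ⟨by linarith [n.cast_nonneg (α := ℝ)], by linarith⟩
  calc ‖((n : ℝ) - 1) * ((2 * n - 1).choose n : ℝ) * x ^ n‖
      = |(n : ℝ) - 1| * ((2 * n - 1).choose n : ℝ) * |x| ^ n := by
        simp only [norm_mul, norm_pow, Real.norm_eq_abs, Nat.abs_cast]
    _ ≤ (n + 1) * 4 ^ n * |x| ^ n := by gcongr
    _ = (n + 1) * (4 * |x|) ^ n := by ring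

theorem one_div_eight_le_sub_one_mul_choose_mul_pow {n : ℕ} (hn : 2 ≤ n) :
    1 / 8 ≤ ((n : ℝ) - 1) * ((2 * n - 1).choose n : ℝ) * (1 / 4) ^ n := by
  have h := (Nat.cast_le (α := ℝ)).mpr (Nat.four_pow_le_eight_mul_sub_one_mul_choose hn)
  push_cast [Nat.cast_sub (show 1 ≤ n by omega)] at h
  rw [div_pow, one_pow, ← div_eq_mul_one_div, le_div_iff₀ (by positivity)]
  linarith

theorem tendsto_tsum_atTop_of_infinite_limits_ge {α ι : Type*} {l : Filter α}
    {f : ι → α → ℝ} {b : ι → ℝ} {c : ℝ} (hc : 0 < c)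
    (hlim : ∀ i, Tendsto (f i) l (nhds (b i))) (hinf : {i | c ≤ b i}.Infinite)
    (hnonneg : ∀ᶠ x in l, ∀ i, 0 ≤ f i x) (hsum : ∀ᶠ x in l, Summable fun i => f i x) :
    Tendsto (fun x => ∑' i, f i x) l atTop := by
  refine tendsto_atTop.mpr fun M => ?_
  obtain ⟨N, hN⟩ := exists_nat_gt (M / c)
  obtain ⟨t, hts, rfl⟩ := hinf.exists_subset_card_eq N
  have hbig : M < ∑ i ∈ t, b i :=
    calc M < t.card * c := (div_lt_iff₀ hc).mp hN
      _ ≤ ∑ i ∈ t, b i := by simpa using Finset.card_nsmul_le_sum t b c fun i hi => hts hi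
  have hpartial : ∀ᶠ x in l, M < ∑ i ∈ t, f i x :=
    (tendsto_finsetSum t fun i _ => hlim i).eventually (eventually_gt_nhds hbig)
  filter_upwards [hpartial, hnonneg, hsum] with x hMx hnonneg_x hsum_x
  exact hMx.le.trans (hsum_x.sum_le_tsum t fun i _ => hnonneg_x i)

theorem Hseries_summable_and_tendsto_atTop_general (D : Set ℕ)
    (hinf : {i : ℕ | 1 ≤ i ∧ 2 * i ∈ D}.Infinite) :
    (∀ x : ℝ, 0 ≤ x → x < 1 / 4 →
        Summable (fun i : {i : ℕ // 1 ≤ i ∧ 2 * i ∈ D} =>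
          (((i : ℕ) : ℝ) - 1) * (Nat.choose (2 * (i : ℕ) - 1) (i : ℕ) : ℝ) * x ^ (i : ℕ))) ∧
      Tendsto (Hseries D) (nhdsWithin (1 / 4) (Set.Iio (1 / 4))) atTop := by
  have hsum : ∀ x : ℝ, 0 ≤ x → x < 1 / 4 →
      Summable (fun i : {i : ℕ // 1 ≤ i ∧ 2 * i ∈ D} =>
        (((i : ℕ) : ℝ) - 1) * (Nat.choose (2 * (i : ℕ) - 1) (i : ℕ) : ℝ) * x ^ (i : ℕ)) :=
    fun x hx0 hx =>
      (summable_sub_one_mul_choose_mul_pow (by rwa [abs_of_nonneg hx0])).subtype _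
  refine ⟨hsum, tendsto_tsum_atTop_of_infinite_limits_ge (c := 1 / 8) (by norm_num)
    (fun i => ((continuous_const.mul (continuous_pow _)).tendsto _).mono_left nhdsWithin_le_nhds)
    ?_ ?_ ?_⟩
  · have : Infinite {i : ℕ // 1 ≤ i ∧ 2 * i ∈ D} := hinf.to_subtype
    refine ((Set.finite_Iio 2).preimage Subtype.val_injective.injOn).infinite_compl.mono
      fun i hi => one_div_eight_le_sub_one_mul_choose_mul_pow (not_lt.mp hi)
  · filter_upwards [self_mem_nhdsWithin, Ioo_mem_nhdsLT (show (0 : ℝ) < 1 / 4 by norm_num)]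
      with x _ hx i
    have hi : (1 : ℝ) ≤ (i : ℕ) := by exact_mod_cast i.2.1
    exact mul_nonneg (mul_nonneg (by linarith) (by positivity)) (pow_nonneg hx.1.le _)
  · filter_upwards [Ioo_mem_nhdsLT (show (0 : ℝ) < 1 / 4 by norm_num)] with x hx
    exact hsum x hx.1.le hx.2

/-- If `D` is a set of even positive integers with infinite index set
`I = {i : 2i ∈ D}`, then for `0 ≤ x < 1/4` the family defining `H(x)` is summable, and
`H(x) → +∞` as `x → 1/4⁻`. -/
theorem Hseries_summable_and_tendsto_atTop (D : Set ℕ)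
    (hD : ∀ d ∈ D, Even d ∧ 0 < d)
    (hinf : {i : ℕ | 1 ≤ i ∧ 2 * i ∈ D}.Infinite) :
    (∀ x : ℝ, 0 ≤ x → x < 1 / 4 →
        Summable (fun i : {i : ℕ // 1 ≤ i ∧ 2 * i ∈ D} =>
          (((i : ℕ) : ℝ) - 1) * (Nat.choose (2 * (i : ℕ) - 1) (i : ℕ) : ℝ) * x ^ (i : ℕ))) ∧
      Tendsto (Hseries D) (nhdsWithin (1 / 4) (Set.Iio (1 / 4))) atTop :=
  Hseries_summable_and_tendsto_atTop_general D hinf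
end

section
/- Let D be a set of even positive integers that is not a subset of {2} (i.e., there exists 2i ∈ D with i ≥ 2). Then there exists a unique R₀ > 0 such that the family i ↦ (i−1)·C(2i−1, i)·R₀^i (over i ∈ ℕ with 2i ∈ D) is summable with sum equal to 1. Moreover, if the index set {i : 2i ∈ D} is infinite, then R₀ < 1/4. -/
open Filter Real

/-- The term `(i−1)·C(2i−1,i)·x^i` for an index `i` with `2i ∈ D`. -/
noncomputable def bipTerm (D : Set ℕ) (x : ℝ) (i : {i : ℕ // 2 * i ∈ D}) : ℝ :=
  (((i : ℕ) : ℝ) - 1) * (Nat.choose (2 * (i : ℕ) - 1) (i : ℕ) : ℝ) * x ^ (i : ℕ)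

/-!
Write the series as `∑ cᵢ x^{eᵢ}` with `cᵢ ≥ 0` and `eᵢ ≥ 1`. Its sum vanishes at `0` and is
continuous and strictly increasing wherever it converges, so it takes the value `1` exactly once
as soon as some admissible `b` gives a sum `≥ 1`. With finitely many indices `b = 1` works, as
`(i-1)·C(2i-1,i) ≥ 1` for `i ≥ 2`. With infinitely many, the bounds
`4^i / 8 ≤ (i-1)·C(2i-1,i) ≤ (i+1)·4^i` (for `i ≥ 2`) show that the series converges on
`[0, 1/4)` while its terms at `1/4` stay `≥ 1/8`. So some finite partial sum at `1/4` exceeds `1`,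
hence so does the series slightly to the left of `1/4`, and no solution lies at or beyond `1/4`.
-/

open Set Topology

section PowerSeries

variable {ι : Type*} {c : ι → ℝ} {e : ι → ℕ}

theorem summable_mul_pow_of_le (hc : ∀ i, 0 ≤ c i) {x y : ℝ} (hx : 0 ≤ x) (hxy : x ≤ y)
    (hy : Summable fun i => c i * y ^ e i) : Summable fun i => c i * x ^ e i :=
  hy.of_nonneg_of_le (fun i => mul_nonneg (hc i) (pow_nonneg hx _))
    fun i => mul_le_mul_of_nonneg_left (pow_le_pow_left₀ hx hxy _) (hc i)

theorem tsum_mul_pow_lt_tsum_mul_pow (hc : ∀ i, 0 ≤ c i) (he : ∀ i, e i ≠ 0) {x y : ℝ}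
    (hx : 0 ≤ x) (hxy : x < y) (hsx : Summable fun i => c i * x ^ e i)
    (hsy : Summable fun i => c i * y ^ e i) (hpos : 0 < ∑' i, c i * x ^ e i) :
    ∑' i, c i * x ^ e i < ∑' i, c i * y ^ e i := by
  obtain ⟨i, hi⟩ : ∃ i, c i * x ^ e i ≠ 0 := by
    by_contra! h
    simp [h] at hpos
  have hci : 0 < c i := (hc i).lt_of_ne (left_ne_zero_of_mul hi).symm
  exact hsx.tsum_lt_tsum
    (fun j => mul_le_mul_of_nonneg_left (pow_le_pow_left₀ hx hxy.le _) (hc j))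
    (mul_lt_mul_of_pos_left (pow_lt_pow_left₀ hxy hx (he i)) hci) hsy

theorem exists_mem_Ioc_tsum_mul_pow_eq (hc : ∀ i, 0 ≤ c i) (he : ∀ i, e i ≠ 0) {a b : ℝ}
    (ha : 0 < a) (hb : 0 ≤ b) (hsb : Summable fun i => c i * b ^ e i)
    (hab : a ≤ ∑' i, c i * b ^ e i) : ∃ x ∈ Ioc 0 b, ∑' i, c i * x ^ e i = a := by
  have hcont : ContinuousOn (fun x => ∑' i, c i * x ^ e i) (Icc 0 b) :=
    continuousOn_tsum (fun i => by fun_prop) hsb fun i x hx => by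
      rw [norm_of_nonneg (mul_nonneg (hc i) (pow_nonneg hx.1 _))]
      exact mul_le_mul_of_nonneg_left (pow_le_pow_left₀ hx.1 hx.2 _) (hc i)
  have hzero : ∑' i, c i * (0 : ℝ) ^ e i = 0 := by simp [zero_pow (he _)]
  obtain ⟨x, hx, hxa⟩ := intermediate_value_Icc hb hcont ⟨by rw [hzero]; exact ha.le, hab⟩
  refine ⟨x, ⟨hx.1.lt_of_ne ?_, hx.2⟩, hxa⟩
  rintro rfl
  exact ha.ne' (hxa ▸ hzero)

theorem existsUnique_pos_tsum_mul_pow_eq_one (hc : ∀ i, 0 ≤ c i) (he : ∀ i, e i ≠ 0)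
    {b : ℝ} (hb : 0 ≤ b) (hsb : Summable fun i => c i * b ^ e i)
    (hb1 : 1 ≤ ∑' i, c i * b ^ e i) :
    ∃! x : ℝ, 0 < x ∧ Summable (fun i => c i * x ^ e i) ∧ ∑' i, c i * x ^ e i = 1 := by
  obtain ⟨x, hx, hx1⟩ := exists_mem_Ioc_tsum_mul_pow_eq hc he one_pos hb hsb hb1
  have hsx := summable_mul_pow_of_le hc hx.1.le hx.2 hsb
  refine ⟨x, ⟨hx.1, hsx, hx1⟩, ?_⟩
  rintro y ⟨hy, hsy, hy1⟩
  by_contra hne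
  rcases lt_or_gt_of_ne hne with h | h
  · simpa [hx1, hy1] using tsum_mul_pow_lt_tsum_mul_pow hc he hy.le h hsy hsx (by simp [hy1])
  · simpa [hx1, hy1] using tsum_mul_pow_lt_tsum_mul_pow hc he hx.1.le h hsx hsy (by simp [hx1])

theorem exists_one_le_tsum_mul_pow_of_not_summable (hc : ∀ i, 0 ≤ c i) {r : ℝ} (hr : 0 < r)
    (hsr : ¬ Summable fun i => c i * r ^ e i)
    (hs : ∀ x, 0 ≤ x → x < r → Summable fun i => c i * x ^ e i) :
    ∃ b, 0 ≤ b ∧ Summable (fun i => c i * b ^ e i) ∧ 1 ≤ ∑' i, c i * b ^ e i := by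
  obtain ⟨T, hT⟩ : ∃ T : Finset ι, 1 < ∑ i ∈ T, c i * r ^ e i := by
    by_contra! h
    exact hsr (summable_of_sum_le (fun i => mul_nonneg (hc i) (pow_nonneg hr.le _)) h)
  have hnear : ∀ᶠ x in 𝓝[<] r, 1 < ∑ i ∈ T, c i * x ^ e i :=
    have hcont : Continuous fun x => ∑ i ∈ T, c i * x ^ e i := by fun_prop
    nhdsWithin_le_nhds ((hcont.tendsto r).eventually (lt_mem_nhds hT))
  obtain ⟨b, hb1, hb⟩ := (hnear.and (Ioo_mem_nhdsLT hr)).exists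
  have hsb := hs b hb.1.le hb.2
  exact ⟨b, hb.1.le, hsb, hb1.le.trans
    (hsb.sum_le_tsum T fun i _ => mul_nonneg (hc i) (pow_nonneg hb.1.le _))⟩

end PowerSeries

noncomputable def bipCoeff (i : ℕ) : ℝ := ((i : ℝ) - 1) * (Nat.choose (2 * i - 1) i : ℝ)

theorem bipTerm_eq (D : Set ℕ) (x : ℝ) :
    bipTerm D x = fun i : {i : ℕ // 2 * i ∈ D} => bipCoeff i * x ^ (i : ℕ) := rfl

theorem bipCoeff_nonneg {i : ℕ} (hi : 1 ≤ i) : 0 ≤ bipCoeff i :=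
  mul_nonneg (by rw [sub_nonneg]; exact_mod_cast hi) (Nat.cast_nonneg _)

theorem one_le_bipCoeff {i : ℕ} (hi : 2 ≤ i) : 1 ≤ bipCoeff i := by
  have hi' : (2 : ℝ) ≤ i := by exact_mod_cast hi
  have hC : (1 : ℝ) ≤ Nat.choose (2 * i - 1) i := by
    exact_mod_cast Nat.choose_pos (by omega)
  unfold bipCoeff
  nlinarith

theorem abs_bipCoeff_le (i : ℕ) : |bipCoeff i| ≤ (i + 1) * 4 ^ i := by
  have hC : (Nat.choose (2 * i - 1) i : ℝ) ≤ 4 ^ i := by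
    calc (Nat.choose (2 * i - 1) i : ℝ) ≤ 2 ^ (2 * i) := by
          exact_mod_cast (Nat.choose_le_two_pow _ _).trans
            (Nat.pow_le_pow_right two_pos (by omega))
      _ = 4 ^ i := by rw [pow_mul]; norm_num
  rw [bipCoeff, abs_mul, Nat.abs_cast]
  refine mul_le_mul ((abs_sub _ _).trans ?_) hC (Nat.cast_nonneg _) (by positivity)
  simp

theorem summable_bipCoeff_mul_pow {x : ℝ} (hx0 : 0 ≤ x) (hx : x < 1 / 4) :
    Summable fun i : ℕ => bipCoeff i * x ^ i := by
  have hr : ‖4 * x‖ < 1 := by rw [norm_of_nonneg (by positivity)]; linarith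
  have hgeom : Summable fun i : ℕ => ((i : ℝ) + 1) * (4 * x) ^ i := by
    simpa [add_mul] using
      (summable_pow_mul_geometric_of_norm_lt_one 1 hr).add (summable_geometric_of_norm_lt_one hr)
  refine hgeom.of_norm_bounded fun i => ?_
  rw [norm_mul, norm_pow, norm_of_nonneg hx0, Real.norm_eq_abs, mul_pow, ← mul_assoc]
  exact mul_le_mul_of_nonneg_right (abs_bipCoeff_le i) (pow_nonneg hx0 _)

theorem Nat.centralBinom_succ_eq_two_mul_choose (m : ℕ) :
    Nat.centralBinom (m + 1) = 2 * Nat.choose (2 * m + 1) (m + 1) := by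
  rw [Nat.centralBinom, show 2 * (m + 1) = 2 * m + 1 + 1 by ring, Nat.choose_succ_succ',
    Nat.choose_symm_half]
  ring

theorem inv_eight_le_bipCoeff_mul_quarter_pow {i : ℕ} (hi : 2 ≤ i) :
    1 / 8 ≤ bipCoeff i * (1 / 4) ^ i := by
  obtain ⟨m, rfl⟩ : ∃ m, i = m + 1 := ⟨i - 1, by omega⟩
  have hC : (4 : ℝ) ^ (m + 1) ≤ 4 * (m + 1 : ℕ) * Nat.choose (2 * m + 1) (m + 1) := by
    have := Nat.four_pow_le_two_mul_self_mul_centralBinom (m + 1) m.succ_pos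
    rw [Nat.centralBinom_succ_eq_two_mul_choose] at this
    exact_mod_cast this.trans_eq (by ring)
  have hm : (1 : ℝ) ≤ m := by exact_mod_cast (by omega : 1 ≤ m)
  have hC0 : (0 : ℝ) ≤ Nat.choose (2 * m + 1) (m + 1) := Nat.cast_nonneg _
  rw [bipCoeff, show 2 * (m + 1) - 1 = 2 * m + 1 by omega, div_pow, one_pow, mul_one_div,
    le_div_iff₀ (by positivity)]
  push_cast at hC ⊢
  nlinarith

theorem not_summable_bipCoeff_mul_quarter_pow {S : Set ℕ} (hS : S.Infinite) :
    ¬ Summable fun i : S => bipCoeff i * (1 / 4) ^ (i : ℕ) := by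
  intro hs
  have hfin : {i : S | ¬ bipCoeff i * (1 / 4) ^ (i : ℕ) < 1 / 8}.Finite :=
    eventually_cofinite.1 (hs.tendsto_cofinite_zero.eventually (gt_mem_nhds (by norm_num)))
  refine (hS.sdiff (Set.finite_Iio 2)) ((hfin.image Subtype.val).subset ?_)
  rintro i ⟨hiS, hi⟩
  exact ⟨⟨i, hiS⟩, not_lt.2 (inv_eight_le_bipCoeff_mul_quarter_pow (not_lt.1 hi)), rfl⟩

theorem pos_of_two_mul_mem {D : Set ℕ} (hD : ∀ d ∈ D, 0 < d) (i : {i : ℕ // 2 * i ∈ D}) :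
    0 < (i : ℕ) := by
  have := hD _ i.2
  omega

theorem exists_one_le_tsum_bipTerm {D : Set ℕ} (hD : ∀ d ∈ D, 0 < d)
    (hne : ∃ i : ℕ, 2 ≤ i ∧ 2 * i ∈ D) :
    ∃ b : ℝ, 0 ≤ b ∧ Summable (bipTerm D b) ∧ 1 ≤ ∑' i, bipTerm D b i := by
  have hc (i : {i : ℕ // 2 * i ∈ D}) : 0 ≤ bipCoeff i :=
    bipCoeff_nonneg (pos_of_two_mul_mem hD i)
  simp only [bipTerm_eq]
  by_cases hI : {i : ℕ | 2 * i ∈ D}.Infinite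
  · exact exists_one_le_tsum_mul_pow_of_not_summable hc (by norm_num)
      (not_summable_bipCoeff_mul_quarter_pow hI)
      fun x hx0 hx => (summable_bipCoeff_mul_pow hx0 hx).subtype _
  · have : Finite {i : ℕ // 2 * i ∈ D} := (Set.not_infinite.1 hI).to_subtype
    obtain ⟨i₀, hi₀, hi₀D⟩ := hne
    have hsum : Summable fun i : {i : ℕ // 2 * i ∈ D} => bipCoeff i * 1 ^ (i : ℕ) := .of_finite
    refine ⟨1, zero_le_one, hsum, ?_⟩
    calc (1 : ℝ) ≤ bipCoeff i₀ * 1 ^ i₀ := by simpa using one_le_bipCoeff hi₀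
      _ ≤ _ := hsum.le_tsum ⟨i₀, hi₀D⟩ fun i _ => by simpa using hc i

/-- If `D` is a set of even positive integers containing some `2i` with `i ≥ 2`, then
there is a unique `R₀ > 0` with `Σ_{2i ∈ D} (i−1)·C(2i−1,i)·R₀^i = 1` (the family being
summable); moreover if `{i : 2i ∈ D}` is infinite then `R₀ < 1/4`. -/
theorem unique_characteristic_point (D : Set ℕ)
    (hD : ∀ d ∈ D, Even d ∧ 0 < d)
    (hne : ∃ i : ℕ, 2 ≤ i ∧ 2 * i ∈ D) :
    (∃! R₀ : ℝ, 0 < R₀ ∧ Summable (bipTerm D R₀) ∧ ∑' i, bipTerm D R₀ i = 1) ∧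
      ({i : ℕ | 2 * i ∈ D}.Infinite →
        ∀ R₀ : ℝ, (0 < R₀ ∧ Summable (bipTerm D R₀) ∧ ∑' i, bipTerm D R₀ i = 1) →
          R₀ < 1 / 4) := by
  have hD₀ : ∀ d ∈ D, 0 < d := fun d hd => (hD d hd).2
  have hc (i : {i : ℕ // 2 * i ∈ D}) : 0 ≤ bipCoeff i :=
    bipCoeff_nonneg (pos_of_two_mul_mem hD₀ i)
  obtain ⟨b, hb, hsb, hb1⟩ := exists_one_le_tsum_bipTerm hD₀ hne
  simp only [bipTerm_eq] at hsb hb1 ⊢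
  refine ⟨existsUnique_pos_tsum_mul_pow_eq_one hc (fun i => (pos_of_two_mul_mem hD₀ i).ne')
    hb hsb hb1, fun hI R₀ ⟨_, hs, _⟩ => ?_⟩
  by_contra! h
  exact not_summable_bipCoeff_mul_quarter_pow hI (summable_mul_pow_of_le hc (by norm_num) h hs)
end

section
/- Let D be a set of even positive integers that is not a subset of {2} (i.e., there exists 2i ∈ D with i ≥ 2). Then there exist real numbers z₀ > 0 and R₀ > 0 such that the families i ↦ C(2i−1, i)·R₀^i and i ↦ i·C(2i−1, i)·R₀^{i−1} (over i ∈ ℕ with 2i ∈ D) are summable and the characteristic system R₀ = z₀ + z₀·Σ_{2i∈D} C(2i−1, i)·R₀^i and 1 = z₀·Σ_{2i∈D} i·C(2i−1, i)·R₀^{i−1} holds. -/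
open Filter Real

lemma charSys_choose_symm (m : ℕ) :
    Nat.choose (2 * m + 1) (m + 1) = Nat.choose (2 * m + 1) m := by
  have h2 := Nat.choose_symm (n := 2 * m + 1) (k := m + 1) (by omega)
  rw [show 2 * m + 1 - (m + 1) = m by omega] at h2
  exact h2.symm

lemma charSys_two_mul_choose (m : ℕ) :
    Nat.choose (2 * m + 2) (m + 1) = 2 * Nat.choose (2 * m + 1) (m + 1) := by
  have h1 := Nat.choose_succ_succ' (2 * m + 1) m
  rw [show 2 * m + 1 + 1 = 2 * m + 2 by omega] at h1
  have h2 := charSys_choose_symm m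
  omega

lemma charSys_choose_le (n : ℕ) : Nat.choose (2 * n - 1) n ≤ 4 ^ n := by
  rcases Nat.eq_zero_or_pos n with rfl | hn
  · simp
  · obtain ⟨m, rfl⟩ : ∃ m, n = m + 1 := ⟨n - 1, by omega⟩
    rw [show 2 * (m + 1) - 1 = 2 * m + 1 by omega]
    calc Nat.choose (2 * m + 1) (m + 1) = Nat.choose (2 * m + 1) m :=
          charSys_choose_symm m
      _ ≤ 4 ^ m := Nat.choose_middle_le_pow m
      _ ≤ 4 ^ (m + 1) := Nat.pow_le_pow_right (by norm_num) (by omega)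

lemma charSys_four_pow_le (n : ℕ) (hn : 1 ≤ n) :
    4 ^ n ≤ (2 * (2 * n + 1)) * Nat.choose (2 * n - 1) n := by
  obtain ⟨m, rfl⟩ : ∃ m, n = m + 1 := ⟨n - 1, by omega⟩
  rw [show 2 * (m + 1) - 1 = 2 * m + 1 by omega]
  have h := Nat.four_pow_le_two_mul_add_one_mul_central_binom (m + 1)
  rw [show 2 * (m + 1) = 2 * m + 2 by omega] at h
  rw [charSys_two_mul_choose m] at h
  calc 4 ^ (m + 1) ≤ (2 * (m + 1) + 1) * (2 * Nat.choose (2 * m + 1) (m + 1)) := h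
    _ ≤ (2 * (2 * (m + 1) + 1)) * Nat.choose (2 * m + 1) (m + 1) := by ring_nf; omega

/-- If `D` is a set of even positive integers containing some `2i` with `i ≥ 2`, then the
characteristic system `R₀ = z₀ + z₀·Σ_{2i∈D} C(2i−1,i)·R₀^i`,
`1 = z₀·Σ_{2i∈D} i·C(2i−1,i)·R₀^{i−1}` has a solution with `z₀ > 0`, `R₀ > 0` and both
families summable. -/
theorem characteristic_system_solvable (D : Set ℕ)
    (hD : ∀ d ∈ D, Even d ∧ 0 < d)
    (hne : ∃ i : ℕ, 2 ≤ i ∧ 2 * i ∈ D) :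
    ∃ z₀ R₀ : ℝ, 0 < z₀ ∧ 0 < R₀ ∧
      Summable (fun i : {i : ℕ // 2 * i ∈ D} =>
        (Nat.choose (2 * (i : ℕ) - 1) (i : ℕ) : ℝ) * R₀ ^ (i : ℕ)) ∧
      Summable (fun i : {i : ℕ // 2 * i ∈ D} =>
        ((i : ℕ) : ℝ) * (Nat.choose (2 * (i : ℕ) - 1) (i : ℕ) : ℝ) * R₀ ^ ((i : ℕ) - 1)) ∧
      R₀ = z₀ + z₀ * ∑' i : {i : ℕ // 2 * i ∈ D},
          (Nat.choose (2 * (i : ℕ) - 1) (i : ℕ) : ℝ) * R₀ ^ (i : ℕ) ∧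
      1 = z₀ * ∑' i : {i : ℕ // 2 * i ∈ D},
          ((i : ℕ) : ℝ) * (Nat.choose (2 * (i : ℕ) - 1) (i : ℕ) : ℝ) * R₀ ^ ((i : ℕ) - 1) := by
  classical
  obtain ⟨i₀, hi₀2, hi₀D⟩ := hne
  set S : Set ℕ := {n : ℕ | 2 * n ∈ D} with hSdef
  have hS1 : ∀ n ∈ S, 1 ≤ n := by
    intro n hn
    have := (hD _ hn).2
    omega
  set J : ℕ → ℝ := fun n => (Nat.choose (2 * n - 1) n : ℝ) with hJdef
  have hJpos : ∀ n, 0 < J n := by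
    intro n
    have : 0 < Nat.choose (2 * n - 1) n := Nat.choose_pos (by omega)
    simp only [hJdef]
    exact_mod_cast this
  have hJle : ∀ n, J n ≤ 4 ^ n := by
    intro n
    have h := charSys_choose_le n
    simp only [hJdef]
    calc (Nat.choose (2 * n - 1) n : ℝ) ≤ ((4 : ℕ) ^ n : ℝ) := by exact_mod_cast h
      _ = 4 ^ n := by push_cast; ring
  set a : ℕ → ℝ := fun n => S.indicator (fun n => ((n : ℝ) - 1) * J n) n with hadef
  set b : ℕ → ℝ := fun n => S.indicator (fun n => (n : ℝ) * J n) n with hbdef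
  have ha_nonneg : ∀ n, 0 ≤ a n := by
    intro n
    apply Set.indicator_nonneg
    intro m hm
    have := hS1 m hm
    have h1 : (1 : ℝ) ≤ (m : ℝ) := by exact_mod_cast this
    have := hJpos m
    nlinarith
  have hb_nonneg : ∀ n, 0 ≤ b n := by
    intro n
    apply Set.indicator_nonneg
    intro m _
    positivity
  have hab : ∀ n, a n ≤ b n := by
    intro n
    by_cases hn : n ∈ S
    · simp only [hadef, hbdef, Set.indicator_of_mem hn]
      have := (hJpos n).le
      nlinarith
    · simp [hadef, hbdef, Set.indicator_of_notMem hn]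
  -- Step 1: find r > 0 with summability and tsum a n r^n ≥ 1
  obtain ⟨r, hr0, hsumb, hψ⟩ :
      ∃ r : ℝ, 0 < r ∧ Summable (fun n => b n * r ^ n) ∧
        1 ≤ ∑' n, a n * r ^ n := by
    by_cases hfin : S.Finite
    · refine ⟨1, one_pos, ?_, ?_⟩
      · apply summable_of_ne_finset_zero (s := hfin.toFinset)
        intro n hn
        have hn' : n ∉ S := by simpa using hn
        simp [hbdef, Set.indicator_of_notMem hn']
      · have hsa : Summable (fun n => a n * 1 ^ n) := by
          apply summable_of_ne_finset_zero (s := hfin.toFinset)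
          intro n hn
          have hn' : n ∉ S := by simpa using hn
          simp [hadef, Set.indicator_of_notMem hn']
        have hi₀S : i₀ ∈ S := hi₀D
        have hterm : (1 : ℝ) ≤ a i₀ * 1 ^ i₀ := by
          simp only [one_pow, mul_one, hadef, Set.indicator_of_mem hi₀S]
          have h1 : (1 : ℝ) ≤ (i₀ : ℝ) - 1 := by
            have : (2 : ℝ) ≤ (i₀ : ℝ) := by exact_mod_cast hi₀2
            linarith
          have h2 : (1 : ℝ) ≤ J i₀ := by
            have h3 : (1 : ℕ) ≤ Nat.choose (2 * i₀ - 1) i₀ := Nat.choose_pos (by omega)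
            simp only [hJdef]
            exact_mod_cast h3
          nlinarith
        calc (1 : ℝ) ≤ a i₀ * 1 ^ i₀ := hterm
          _ ≤ ∑' n, a n * 1 ^ n := Summable.le_tsum hsa i₀ (fun j _ => by
              have := ha_nonneg j; positivity)
    · -- infinite case
      have hinf : (S \ {0, 1} : Set ℕ).Infinite := by
        apply Set.Infinite.diff hfin
        exact (Set.finite_singleton 1).insert 0
      obtain ⟨T, hTsub, hTcard⟩ := hinf.exists_subset_card_eq 20
      have hTne : T.Nonempty := by
        rw [← Finset.card_pos, hTcard]; norm_num
      set m : ℕ := T.sup id with hmdef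
      have hTm : ∀ i ∈ T, i ≤ m := fun i hi => Finset.le_sup (f := id) hi
      have hT2 : ∀ i ∈ T, 2 ≤ i ∧ i ∈ S := by
        intro i hi
        have := hTsub hi
        simp only [Set.mem_diff, Set.mem_insert_iff, Set.mem_singleton_iff] at this
        exact ⟨by omega, this.1⟩
      have hm2 : 2 ≤ m := by
        obtain ⟨i, hi⟩ := hTne
        exact le_trans (hT2 i hi).1 (hTm i hi)
      have hmR : (2 : ℝ) ≤ (m : ℝ) := by exact_mod_cast hm2
      set r : ℝ := (1 - 1 / (2 * m)) / 4 with hrdef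
      have h4r : 4 * r = 1 - 1 / (2 * m) := by rw [hrdef]; ring
      have h4r_lt : 4 * r < 1 := by
        rw [h4r]
        have : 0 < 1 / (2 * (m : ℝ)) := by positivity
        linarith
      have h4r_pos : 0 < 4 * r := by
        rw [h4r]
        have : 1 / (2 * (m : ℝ)) ≤ 1 / 4 := by
          apply div_le_div_of_nonneg_left <;> linarith
        linarith
      have hr0 : 0 < r := by linarith
      have hbig : Summable (fun n : ℕ => (n : ℝ) * (4 * r) ^ n) := by
        have := summable_pow_mul_geometric_of_norm_lt_one (R := ℝ) 1
          (r := 4 * r) (by rw [Real.norm_eq_abs, abs_of_pos h4r_pos]; exact h4r_lt)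
        simpa using this
      have hble : ∀ n, b n * r ^ n ≤ (n : ℝ) * (4 * r) ^ n := by
        intro n
        by_cases hn : n ∈ S
        · simp only [hbdef, Set.indicator_of_mem hn]
          have h1 : J n * r ^ n ≤ (4 * r) ^ n := by
            calc J n * r ^ n ≤ 4 ^ n * r ^ n := by
                  apply mul_le_mul_of_nonneg_right (hJle n) (by positivity)
              _ = (4 * r) ^ n := by rw [mul_pow]
          calc (n : ℝ) * J n * r ^ n = (n : ℝ) * (J n * r ^ n) := by ring
            _ ≤ (n : ℝ) * (4 * r) ^ n := by
                apply mul_le_mul_of_nonneg_left h1 (by positivity)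
        · simp only [hbdef, Set.indicator_of_notMem hn, zero_mul]
          positivity
      have hsumb : Summable (fun n => b n * r ^ n) := by
        apply Summable.of_nonneg_of_le (fun n => by have := hb_nonneg n; positivity)
          hble hbig
      have hsuma : Summable (fun n => a n * r ^ n) := by
        apply Summable.of_nonneg_of_le (fun n => by have := ha_nonneg n; positivity)
          (fun n => mul_le_mul_of_nonneg_right (hab n) (by positivity)) hsumb
      refine ⟨r, hr0, hsumb, ?_⟩
      have hterm : ∀ i ∈ T, (1 / 20 : ℝ) ≤ a i * r ^ i := by
        intro i hi
        obtain ⟨hi2, hiS⟩ := hT2 i hi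
        have hiR : (2 : ℝ) ≤ (i : ℝ) := by exact_mod_cast hi2
        simp only [hadef, Set.indicator_of_mem hiS]
        have hJlb : (4 : ℝ) ^ i / (2 * (2 * i + 1)) ≤ J i := by
          have h := charSys_four_pow_le i (by omega)
          have h' : ((4 : ℝ)) ^ i ≤ (2 * (2 * (i : ℝ) + 1)) * J i := by
            simp only [hJdef]
            exact_mod_cast h
          rw [div_le_iff₀ (by positivity)]
          linarith
        have hpow : (1 / 2 : ℝ) ≤ (4 * r) ^ i := by
          have h1 : (4 * r) ^ m ≤ (4 * r) ^ i :=
            pow_le_pow_of_le_one h4r_pos.le h4r_lt.le (hTm i hi)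
          have h2 : (1 / 2 : ℝ) ≤ (4 * r) ^ m := by
            rw [h4r]
            have hber := one_add_mul_le_pow (a := -(1 / (2 * (m : ℝ)))) (by
              have : 0 < 1 / (2 * (m : ℝ)) := by positivity
              linarith) m
            have hm0 : (m : ℝ) ≠ 0 := by positivity
            have heq : 1 + (m : ℝ) * (-(1 / (2 * m))) = 1 / 2 := by
              field_simp
              ring
            rw [heq] at hber
            calc (1 / 2 : ℝ) ≤ (1 + -(1 / (2 * (m : ℝ)))) ^ m := hber
              _ = (1 - 1 / (2 * (m : ℝ))) ^ m := by ring_nf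
          linarith
        have hfrac : (1 / 10 : ℝ) ≤ ((i : ℝ) - 1) / (2 * (2 * i + 1)) := by
          rw [le_div_iff₀ (by positivity)]
          linarith
        have key : (((i : ℝ) - 1) / (2 * (2 * i + 1))) * (4 * r) ^ i
            ≤ ((i : ℝ) - 1) * J i * r ^ i := by
          have hr_pow : (0 : ℝ) < r ^ i := by positivity
          calc (((i : ℝ) - 1) / (2 * (2 * i + 1))) * (4 * r) ^ i
              = (((i : ℝ) - 1) * (4 ^ i / (2 * (2 * i + 1)))) * r ^ i := by
                rw [mul_pow]; ring
            _ ≤ (((i : ℝ) - 1) * J i) * r ^ i := by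
                apply mul_le_mul_of_nonneg_right _ hr_pow.le
                apply mul_le_mul_of_nonneg_left hJlb (by linarith)
        calc (1 / 20 : ℝ) = (1 / 10) * (1 / 2) := by norm_num
          _ ≤ (((i : ℝ) - 1) / (2 * (2 * i + 1))) * (4 * r) ^ i := by
              apply mul_le_mul hfrac hpow (by norm_num)
              positivity
          _ ≤ ((i : ℝ) - 1) * J i * r ^ i := key
      calc (1 : ℝ) = ∑ _i ∈ T, (1 / 20 : ℝ) := by
            rw [Finset.sum_const, hTcard]; norm_num
        _ ≤ ∑ i ∈ T, a i * r ^ i := Finset.sum_le_sum hterm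
        _ ≤ ∑' n, a n * r ^ n := Summable.sum_le_tsum T (fun n _ => by
            have := ha_nonneg n; positivity) hsuma
  -- common facts
  have hsuma : Summable (fun n => a n * r ^ n) := by
    apply Summable.of_nonneg_of_le (fun n => by have := ha_nonneg n; positivity)
      (fun n => mul_le_mul_of_nonneg_right (hab n) (by positivity)) hsumb
  -- Step 2: IVT to find R₀ ∈ (0, r] with ∑' a n R₀^n = 1
  have hclamp_mem : ∀ x : ℝ, 0 ≤ max 0 (min x r) ∧ max 0 (min x r) ≤ r := by
    intro x
    exact ⟨le_max_left _ _, max_le hr0.le (min_le_right _ _)⟩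
  have hF : Continuous (fun x : ℝ => ∑' n, a n * (max 0 (min x r)) ^ n) := by
    apply continuous_tsum (u := fun n => a n * r ^ n)
    · intro n
      fun_prop
    · exact hsuma
    · intro n x
      rw [Real.norm_eq_abs, abs_of_nonneg (by
        have := (hclamp_mem x).1; have := ha_nonneg n; positivity)]
      apply mul_le_mul_of_nonneg_left _ (ha_nonneg n)
      exact pow_le_pow_left₀ (hclamp_mem x).1 (hclamp_mem x).2 n
  have hF0 : ∑' n, a n * (max 0 (min (0:ℝ) r)) ^ n = 0 := by
    have hc0 : max 0 (min (0:ℝ) r) = 0 := by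
      simp [min_eq_left hr0.le]
    rw [hc0]
    rw [tsum_eq_single 0 (fun n hn => by
      rw [zero_pow hn, mul_zero])]
    have h0S : (0 : ℕ) ∉ S := by
      intro h
      exact absurd (hS1 0 h) (by omega)
    simp [hadef, Set.indicator_of_notMem h0S]
  have hFr : ∑' n, a n * (max 0 (min r r)) ^ n = ∑' n, a n * r ^ n := by
    rw [min_self, max_eq_right hr0.le]
  have h1mem : (1 : ℝ) ∈ Set.Icc ((fun x : ℝ => ∑' n, a n * (max 0 (min x r)) ^ n) 0)
      ((fun x : ℝ => ∑' n, a n * (max 0 (min x r)) ^ n) r) := by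
    simp only
    rw [hF0, hFr]
    exact ⟨zero_le_one, hψ⟩
  obtain ⟨R₀, hR₀mem, hFR₀⟩ := intermediate_value_Icc hr0.le hF.continuousOn h1mem
  have hFR₀' : ∑' n, a n * (max 0 (min R₀ r)) ^ n = 1 := hFR₀
  have hcR₀ : max 0 (min R₀ r) = R₀ := by
    rw [min_eq_left hR₀mem.2, max_eq_right hR₀mem.1]
  rw [hcR₀] at hFR₀'
  have hR₀pos : 0 < R₀ := by
    rcases lt_or_eq_of_le hR₀mem.1 with h | h
    · exact h
    · exfalso
      rw [← h] at hFR₀'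
      have h0S : (0:ℝ) = max 0 (min (0:ℝ) r) := by simp [min_eq_left hr0.le]
      rw [h0S, hF0] at hFR₀'
      norm_num at hFR₀'
  have hkey : ∑' n, a n * R₀ ^ n = 1 := hFR₀'
  have hR₀r : R₀ ≤ r := hR₀mem.2
  -- Step 3: summability over the subtype and the equations
  have hiS : ∀ i : ↥S, 1 ≤ (i : ℕ) := fun i => hS1 _ i.2
  have hpowle : ∀ n : ℕ, R₀ ^ n ≤ r ^ n := fun n =>
    pow_le_pow_left₀ hR₀pos.le hR₀r n
  have hsub1 : Summable (fun i : ↥S => J (i : ℕ) * R₀ ^ (i : ℕ)) := by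
    apply (summable_subtype_iff_indicator (s := S)
      (f := fun n => J n * R₀ ^ n)).mpr
    apply Summable.of_nonneg_of_le _ _ hsumb
    · intro n
      apply Set.indicator_nonneg
      intro m _
      have := (hJpos m).le
      positivity
    · intro n
      by_cases hn : n ∈ S
      · rw [Set.indicator_of_mem hn]
        simp only [hbdef, Set.indicator_of_mem hn]
        have h1 : (1 : ℝ) ≤ (n : ℝ) := by exact_mod_cast hS1 n hn
        have h2 : J n * R₀ ^ n ≤ J n * r ^ n :=
          mul_le_mul_of_nonneg_left (hpowle n) (hJpos n).le
        have h3 : J n * r ^ n ≤ (n : ℝ) * J n * r ^ n := by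
          have hj := (hJpos n).le
          have hrn : (0:ℝ) ≤ r ^ n := by positivity
          nlinarith [mul_nonneg (mul_nonneg (sub_nonneg.mpr h1) hj) hrn]
        linarith
      · rw [Set.indicator_of_notMem hn]
        simp only [hbdef, Set.indicator_of_notMem hn, zero_mul]
        positivity
  have hsub2 : Summable (fun i : ↥S => ((i : ℕ) : ℝ) * J (i : ℕ) * R₀ ^ ((i : ℕ) - 1)) := by
    apply (summable_subtype_iff_indicator (s := S)
      (f := fun n : ℕ => (n : ℝ) * J n * R₀ ^ (n - 1))).mpr
    apply Summable.of_nonneg_of_le _ _ (hsumb.mul_left R₀⁻¹)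
    · intro n
      apply Set.indicator_nonneg
      intro m _
      have := (hJpos m).le
      positivity
    · intro n
      by_cases hn : n ∈ S
      · rw [Set.indicator_of_mem hn]
        simp only [hbdef, Set.indicator_of_mem hn]
        have hn1 : 1 ≤ n := hS1 n hn
        have e : R₀ ^ (n - 1) * R₀ = R₀ ^ n := by
          rw [← pow_succ]
          congr 1
          omega
        have h2 : R₀ ^ (n - 1) ≤ r ^ n / R₀ := by
          rw [le_div_iff₀ hR₀pos, e]
          exact hpowle n
        have h3 : (n : ℝ) * J n * R₀ ^ (n - 1) ≤ (n : ℝ) * J n * (r ^ n / R₀) := by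
          apply mul_le_mul_of_nonneg_left h2
          have := (hJpos n).le
          positivity
        have h4 : (n : ℝ) * J n * (r ^ n / R₀) = R₀⁻¹ * ((n : ℝ) * J n * r ^ n) := by
          field_simp
        linarith
      · rw [Set.indicator_of_notMem hn]
        simp only [hbdef, Set.indicator_of_notMem hn, zero_mul, mul_zero]
        exact le_refl 0
  have hsub3 : Summable (fun i : ↥S => ((i : ℕ) : ℝ) * J (i : ℕ) * R₀ ^ (i : ℕ)) := by
    apply Summable.congr (hsub2.mul_left R₀)
    intro i
    have h1 : (i : ℕ) - 1 + 1 = (i : ℕ) := by have := hiS i; omega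
    calc R₀ * (((i : ℕ) : ℝ) * J (i : ℕ) * R₀ ^ ((i : ℕ) - 1))
        = ((i : ℕ) : ℝ) * J (i : ℕ) * (R₀ ^ ((i : ℕ) - 1) * R₀) := by ring
      _ = ((i : ℕ) : ℝ) * J (i : ℕ) * R₀ ^ (i : ℕ) := by rw [← pow_succ, h1]
  set A : ℝ := ∑' i : ↥S, J (i : ℕ) * R₀ ^ (i : ℕ) with hAdef
  set B : ℝ := ∑' i : ↥S, ((i : ℕ) : ℝ) * J (i : ℕ) * R₀ ^ ((i : ℕ) - 1) with hBdef
  have hBpos : 0 < B := by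
    have hpos : (0 : ℝ) < ((i₀ : ℕ) : ℝ) * J i₀ * R₀ ^ (i₀ - 1) := by
      have h1 : (0 : ℝ) < (i₀ : ℝ) := by
        have : (0 : ℕ) < i₀ := by omega
        exact_mod_cast this
      have := hJpos i₀
      positivity
    exact Summable.tsum_pos hsub2 (fun i => by
      have := (hJpos (i : ℕ)).le
      positivity) ⟨i₀, hi₀D⟩ hpos
  have hRB : R₀ * B = ∑' i : ↥S, ((i : ℕ) : ℝ) * J (i : ℕ) * R₀ ^ (i : ℕ) := by
    rw [hBdef, ← tsum_mul_left]
    apply tsum_congr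
    intro i
    have h1 : (i : ℕ) - 1 + 1 = (i : ℕ) := by have := hiS i; omega
    calc R₀ * (((i : ℕ) : ℝ) * J (i : ℕ) * R₀ ^ ((i : ℕ) - 1))
        = ((i : ℕ) : ℝ) * J (i : ℕ) * (R₀ ^ ((i : ℕ) - 1) * R₀) := by ring
      _ = ((i : ℕ) : ℝ) * J (i : ℕ) * R₀ ^ (i : ℕ) := by rw [← pow_succ, h1]
  have hdiff1 : ∑' i : ↥S, (((i : ℕ) : ℝ) * J (i : ℕ) * R₀ ^ (i : ℕ)
      - J (i : ℕ) * R₀ ^ (i : ℕ))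
      = (∑' i : ↥S, ((i : ℕ) : ℝ) * J (i : ℕ) * R₀ ^ (i : ℕ)) - A :=
    Summable.tsum_sub hsub3 hsub1
  have hdiff2 : ∑' i : ↥S, (((i : ℕ) : ℝ) * J (i : ℕ) * R₀ ^ (i : ℕ)
      - J (i : ℕ) * R₀ ^ (i : ℕ)) = 1 := by
    have e1 : ∀ i : ↥S, (((i : ℕ) : ℝ) * J (i : ℕ) * R₀ ^ (i : ℕ)
        - J (i : ℕ) * R₀ ^ (i : ℕ))
        = (fun n : ℕ => (((n : ℝ) - 1) * J n) * R₀ ^ n) (i : ℕ) := by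
      intro i
      simp only
      ring
    rw [tsum_congr e1]
    rw [tsum_subtype S (fun n : ℕ => (((n : ℝ) - 1) * J n) * R₀ ^ n)]
    have e2 : ∀ n : ℕ, S.indicator (fun n : ℕ => (((n : ℝ) - 1) * J n) * R₀ ^ n) n
        = a n * R₀ ^ n := by
      intro n
      by_cases hn : n ∈ S
      · rw [Set.indicator_of_mem hn]
        simp only [hadef, Set.indicator_of_mem hn]
      · rw [Set.indicator_of_notMem hn]
        simp [hadef, Set.indicator_of_notMem hn]
    rw [tsum_congr e2]
    exact hkey
  have hRB1 : R₀ * B = 1 + A := by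
    rw [hRB]
    linarith [hdiff1, hdiff2]
  have hBne : B ≠ 0 := hBpos.ne'
  refine ⟨B⁻¹, R₀, by positivity, hR₀pos, hsub1, hsub2, ?_, ?_⟩
  · show R₀ = B⁻¹ + B⁻¹ * A
    calc R₀ = B⁻¹ * (R₀ * B) := by field_simp
      _ = B⁻¹ * (1 + A) := by rw [hRB1]
      _ = B⁻¹ + B⁻¹ * A := by ring
  · show (1 : ℝ) = B⁻¹ * B
    rw [inv_mul_cancel₀ hBne]
end

section
/- Let L, R be real numbers with L ≥ 0, R ≥ 0 and L + 2√R < 1. Then the family (ℓ, m) ∈ ℕ×ℕ ↦ B_{ℓ,m}·L^ℓ·R^m is summable and Σ_{ℓ,m ≥ 0} B_{ℓ,m}·L^ℓ·R^m = 1/√((1−L)² − 4R). -/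
open Filter Real

/-- The Motzkin-bridge trinomial coefficient `B_{ℓ,m} = (ℓ+2m)! / (ℓ!·m!·m!)`. -/
def Bcoef (l m : ℕ) : ℕ :=
  (l + 2 * m).factorial / (l.factorial * m.factorial * m.factorial)

/-!
Since `B_{ℓ,m} = C(ℓ+2m, 2m) · C(2m, m)`, summing over `ℓ` first gives the negative binomial
series `Σ_ℓ B_{ℓ,m} L^ℓ = C(2m, m) / (1 - L)^(2m+1)`. With `x = R / (1 - L)²` the remaining sum is
`(1 - L)⁻¹ Σ_m C(2m, m) x^m`, and `C(2m, m) = 4^m · choose(m - 1/2, m)` identifies this with the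
binomial series of `(1 - 4x)^(-1/2)`. All terms are nonnegative, so the iterated sum is the
double sum.
-/

theorem ascPochhammer_smeval_half (n : ℕ) :
    (ascPochhammer ℕ n).smeval (1 / 2 : ℝ) = n.factorial * n.centralBinom / 4 ^ n := by
  induction n with
  | zero => simp
  | succ n ih =>
    have hrec : ((n + 1 : ℕ) : ℝ) * (n + 1).centralBinom = 2 * (2 * n + 1) * n.centralBinom :=
      mod_cast Nat.succ_mul_centralBinom_succ n
    rw [ascPochhammer_succ_right, Polynomial.smeval_mul, ih, Nat.factorial_succ]
    simp only [Polynomial.smeval_add, Polynomial.smeval_X, Polynomial.smeval_natCast, pow_one,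
      pow_zero, nsmul_eq_mul, mul_one]
    push_cast at hrec ⊢
    linear_combination (-(n.factorial : ℝ) / (4 ^ n * 4)) * hrec

theorem Ring.choose_half_add_sub_one (n : ℕ) :
    Ring.choose ((1 / 2 : ℝ) + n - 1) n = n.centralBinom / 4 ^ n := by
  have h := Ring.factorial_nsmul_multichoose_eq_ascPochhammer (1 / 2 : ℝ) n
  rw [Ring.multichoose_eq, ascPochhammer_smeval_half, nsmul_eq_mul] at h
  have : (n.factorial : ℝ) ≠ 0 := by positivity
  field_simp at h ⊢
  linear_combination h

theorem hasSum_centralBinom_mul_pow {x : ℝ} (hx : |x| < 1 / 4) :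
    HasSum (fun n ↦ (n.centralBinom : ℝ) * x ^ n) (1 / √(1 - 4 * x)) := by
  have h4x : 4 * x ∈ Metric.eball (0 : ℝ) 1 := by
    rw [Metric.mem_eball, edist_dist, dist_zero_right, ENNReal.ofReal_lt_one, Real.norm_eq_abs,
      abs_mul, abs_of_pos four_pos]
    linarith
  have := (one_div_one_sub_rpow_hasFPowerSeriesOnBall_zero (1 / 2)).hasSum h4x
  simp only [FormalMultilinearSeries.ofScalars_apply_eq, Ring.choose_half_add_sub_one, zero_add,
    smul_eq_mul, ← Real.sqrt_eq_rpow] at this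
  have hterm (n : ℕ) : (n.centralBinom : ℝ) / 4 ^ n * (4 * x) ^ n = n.centralBinom * x ^ n := by
    rw [mul_pow]; field_simp
  simpa only [hterm] using this

theorem hasSum_prod_of_nonneg_of_fiberwise_snd {α β : Type*} {f : α × β → ℝ} (hf : 0 ≤ f)
    {g : β → ℝ} {a : ℝ} (hfib : ∀ b, HasSum (fun x ↦ f (x, b)) (g b)) (hg : HasSum g a) :
    HasSum f a := by
  have hswap : Summable fun p : β × α ↦ f p.swap :=
    (summable_prod_of_nonneg fun p ↦ hf p.swap).2
      ⟨fun b ↦ (hfib b).summable, hg.summable.congr fun b ↦ (hfib b).tsum_eq.symm⟩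
  have hval : ∑' p : β × α, f p.swap = a :=
    (hg.unique (hswap.hasSum.prod_fiberwise fun b ↦ hfib b)).symm
  exact (Equiv.prodComm α β).symm.hasSum_iff.1 (hval ▸ hswap.hasSum)

theorem Bcoef_eq_choose_mul_centralBinom (l m : ℕ) :
    Bcoef l m = (l + 2 * m).choose (2 * m) * m.centralBinom := by
  have hcentral : m.centralBinom * m.factorial * m.factorial = (2 * m).factorial := by
    rw [Nat.centralBinom_eq_two_mul_choose, two_mul, Nat.add_choose_mul_factorial_mul_factorial]
  have hfac : (l + 2 * m).factorial = (l + 2 * m).choose (2 * m) * m.centralBinom *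
      (l.factorial * m.factorial * m.factorial) := by
    rw [← Nat.add_choose_mul_factorial_mul_factorial l (2 * m), ← hcentral]
    ring
  rw [Bcoef, hfac, Nat.mul_div_cancel _ (by positivity)]

theorem hasSum_Bcoef_mul_pow {r : ℝ} (hr : |r| < 1) (m : ℕ) :
    HasSum (fun l ↦ (Bcoef l m : ℝ) * r ^ l) (m.centralBinom / (1 - r) ^ (2 * m + 1)) := by
  have hterm (l : ℕ) : (Bcoef l m : ℝ) * r ^ l =
      m.centralBinom * ((l + 2 * m).choose (2 * m) * r ^ l) := by
    rw [Bcoef_eq_choose_mul_centralBinom]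
    push_cast
    ring
  simpa only [hterm, mul_one_div] using
    (hasSum_choose_mul_geometric_of_norm_lt_one (2 * m) (by rwa [Real.norm_eq_abs])).mul_left
      (m.centralBinom : ℝ)

/-- For `L, R ≥ 0` with `L + 2√R < 1`, the family `B_{ℓ,m}·L^ℓ·R^m` is summable with sum
`1/√((1−L)² − 4R)`. -/
theorem bridge_gf_value (L R : ℝ) (hL : 0 ≤ L) (hR : 0 ≤ R)
    (h : L + 2 * Real.sqrt R < 1) :
    Summable (fun p : ℕ × ℕ => (Bcoef p.1 p.2 : ℝ) * L ^ p.1 * R ^ p.2) ∧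
      ∑' p : ℕ × ℕ, (Bcoef p.1 p.2 : ℝ) * L ^ p.1 * R ^ p.2 =
        1 / Real.sqrt ((1 - L) ^ 2 - 4 * R) := by
  have hL1 : 0 < 1 - L := by linarith [Real.sqrt_nonneg R]
  have h4R : 4 * R < (1 - L) ^ 2 := by nlinarith [Real.sq_sqrt hR, Real.sqrt_nonneg R]
  have hL_abs : |L| < 1 := abs_lt.2 ⟨by linarith, by linarith⟩
  set x := R / (1 - L) ^ 2 with hx_def
  have hx : |x| < 1 / 4 := by
    rw [abs_of_nonneg (by positivity), div_lt_iff₀ (by positivity)]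
    linarith
  have hrow (m : ℕ) : HasSum (fun l ↦ (Bcoef l m : ℝ) * L ^ l * R ^ m)
      (1 / (1 - L) * (m.centralBinom * x ^ m)) := by
    have hval : m.centralBinom / (1 - L) ^ (2 * m + 1) * R ^ m =
        1 / (1 - L) * (m.centralBinom * x ^ m) := by
      rw [hx_def, div_pow, ← pow_mul, pow_succ]
      field_simp
    rw [← hval]
    exact (hasSum_Bcoef_mul_pow hL_abs m).mul_right (R ^ m)
  have hsum := hasSum_prod_of_nonneg_of_fiberwise_snd
    (f := fun p : ℕ × ℕ ↦ (Bcoef p.1 p.2 : ℝ) * L ^ p.1 * R ^ p.2) (fun p ↦ by positivity) hrow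
    ((hasSum_centralBinom_mul_pow hx).mul_left (1 / (1 - L)))
  refine ⟨hsum.summable, hsum.tsum_eq.trans ?_⟩
  have hdisc : (1 - L) ^ 2 - 4 * R = (1 - L) ^ 2 * (1 - 4 * x) := by
    rw [hx_def]
    field_simp
  rw [hdisc, Real.sqrt_mul (by positivity), Real.sqrt_sq hL1.le, one_div_mul_one_div]
end

section
/- Let L, R be real numbers with L ≥ 0, R > 0 and L + 2√R < 1. Then the family (ℓ, m) ∈ ℕ×ℕ ↦ B^{(+1)}_{ℓ,m}·L^ℓ·R^m is summable and Σ_{ℓ,m ≥ 0} B^{(+1)}_{ℓ,m}·L^ℓ·R^m = (1 − L − √((1−L)² − 4R)) / (2R·√((1−L)² − 4R)). -/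
/-!
Factor `B^{(+1)}_{ℓ,m} = C(ℓ+2m+1, 2m+1) · C(2m+1, m)`. For fixed `m` the sum over `ℓ` is the
negative binomial series, leaving `Σ_m C(2m+1, m) x^m / (1-L)²` with `x = R/(1-L)²`. Since
`2 C(2m+1, m) = C(2m+2, m+1)`, this is a shifted central binomial series
`Σ C(2n, n) x^n = (1 - 4x)^{-1/2}`, which is the binomial series of exponent `-1/2` because
`(1/2)(3/2)⋯((2n-1)/2) · 4^n = n! C(2n, n)`. All terms are nonnegative, so the iterated sum is
the double sum.
-/

open Filter Real

/-- The coefficient `B^{(+1)}_{ℓ,m} = (ℓ+2m+1)! / (ℓ!·m!·(m+1)!)` counting Motzkin paths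
from `0` to `+1`. -/
def BcoefP1 (l m : ℕ) : ℕ :=
  (l + 2 * m + 1).factorial / (l.factorial * m.factorial * (m + 1).factorial)

theorem Nat.factorial_mul_centralBinom_eq_ascPochhammer_half (n : ℕ) :
    (n.factorial * n.centralBinom : ℝ) = (ascPochhammer ℝ n).eval (1 / 2) * 4 ^ n := by
  induction n with
  | zero => simp
  | succ n ih =>
    have h : ((n + 1) * (n + 1).centralBinom : ℝ) = 2 * (2 * n + 1) * n.centralBinom := by
      exact_mod_cast Nat.succ_mul_centralBinom_succ n
    rw [ascPochhammer_succ_eval, Nat.factorial_succ, pow_succ]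
    push_cast
    linear_combination (n.factorial : ℝ) * h + (4 * n + 2) * ih

theorem Ring.multichoose_half_mul_four_pow (n : ℕ) :
    Ring.multichoose (1 / 2 : ℝ) n * 4 ^ n = n.centralBinom := by
  have h := Ring.factorial_nsmul_multichoose_eq_ascPochhammer (1 / 2 : ℝ) n
  rw [Polynomial.ascPochhammer_smeval_eq_eval, nsmul_eq_mul] at h
  have hn : (n.factorial : ℝ) ≠ 0 := by positivity
  apply mul_left_cancel₀ hn
  rw [Nat.factorial_mul_centralBinom_eq_ascPochhammer_half, ← h]
  ring

theorem Nat.centralBinom_succ_eq_two_mul_choose_s6 (n : ℕ) :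
    (n + 1).centralBinom = 2 * (2 * n + 1).choose n := by
  rw [Nat.centralBinom_eq_two_mul_choose, show 2 * (n + 1) = 2 * n + 1 + 1 by ring,
    Nat.choose_succ_succ', Nat.choose_symm_half]
  ring

theorem hasSum_choose_two_mul_add_one_mul_pow {x : ℝ} (hx₀ : x ≠ 0) (hx : |x| < 1 / 4) :
    HasSum (fun n ↦ ((2 * n + 1).choose n : ℝ) * x ^ n)
      ((1 - √(1 - 4 * x)) / (2 * x * √(1 - 4 * x))) := by
  have hs : 0 < √(1 - 4 * x) := Real.sqrt_pos.2 (by linarith [le_abs_self x])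
  have h := (hasSum_nat_add_iff' 1).2 (hasSum_centralBinom_mul_pow hx)
  simp only [Finset.sum_range_one, Nat.centralBinom_zero, Nat.cast_one, pow_zero, mul_one,
    Nat.centralBinom_succ_eq_two_mul_choose_s6] at h
  rw [show (1 - √(1 - 4 * x)) / (2 * x * √(1 - 4 * x)) = (1 / √(1 - 4 * x) - 1) / (2 * x) by
    field_simp]
  refine (h.div_const (2 * x)).congr_fun fun n ↦ ?_
  push_cast
  field_simp
  ring

theorem BcoefP1_eq_choose_mul_choose (l m : ℕ) :
    BcoefP1 l m = (l + (2 * m + 1)).choose (2 * m + 1) * (2 * m + 1).choose m := by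
  have hl := Nat.choose_mul_factorial_mul_factorial (Nat.le_add_left (2 * m + 1) l)
  have hm := Nat.choose_mul_factorial_mul_factorial (show m ≤ 2 * m + 1 by omega)
  rw [Nat.add_sub_cancel] at hl
  rw [show 2 * m + 1 - m = m + 1 by omega] at hm
  rw [BcoefP1, show l + 2 * m + 1 = l + (2 * m + 1) by ring, ← hl, ← hm,
    show _ * (_ * m.factorial * (m + 1).factorial) * l.factorial =
      _ * (2 * m + 1).choose m * (l.factorial * m.factorial * (m + 1).factorial) by ring,
    Nat.mul_div_cancel _ (by positivity)]

theorem hasSum_prod_of_nonneg_of_hasSum_snd {α β : Type*} {f : α × β → ℝ} (hf : 0 ≤ f)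
    {g : β → ℝ} {s : ℝ} (hfg : ∀ b, HasSum (fun a ↦ f (a, b)) (g b)) (hg : HasSum g s) :
    HasSum f s := by
  have hswap : Summable (f ∘ Prod.swap : β × α → ℝ) :=
    (summable_prod_of_nonneg fun p ↦ hf p.swap).2
      ⟨fun b ↦ (hfg b).summable, hg.summable.congr fun b ↦ ((hfg b).tsum_eq).symm⟩
  have hsum : ∑' b, ∑' a, (f ∘ Prod.swap) (b, a) = s :=
    (tsum_congr fun b ↦ (hfg b).tsum_eq).trans hg.tsum_eq
  exact (Equiv.prodComm β α).hasSum_iff.1 (hsum ▸ hswap.tsum_prod ▸ hswap.hasSum)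

theorem hasSum_BcoefP1_mul_pow_fst {L : ℝ} (hL : |L| < 1) (R : ℝ) (m : ℕ) :
    HasSum (fun l ↦ (BcoefP1 l m : ℝ) * L ^ l * R ^ m)
      ((2 * m + 1).choose m * (R / (1 - L) ^ 2) ^ m / (1 - L) ^ 2) := by
  have hu : 1 - L ≠ 0 := by linarith [le_abs_self L]
  have h := (hasSum_choose_mul_geometric_of_norm_lt_one (2 * m + 1) (r := L) hL).mul_right
    ((2 * m + 1).choose m * R ^ m : ℝ)
  rw [show (2 * m + 1).choose m * (R / (1 - L) ^ 2) ^ m / (1 - L) ^ 2 =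
      1 / (1 - L) ^ (2 * m + 1 + 1) * ((2 * m + 1).choose m * R ^ m) by
    rw [div_pow, ← pow_mul]; field_simp; ring]
  refine h.congr_fun fun l ↦ ?_
  rw [BcoefP1_eq_choose_mul_choose]
  push_cast
  ring

/-- For `L ≥ 0`, `R > 0` with `L + 2√R < 1`, the family `B^{(+1)}_{ℓ,m}·L^ℓ·R^m` is
summable with sum `(1 − L − √((1−L)² − 4R)) / (2R·√((1−L)² − 4R))`. -/
theorem bridge_plus_one_gf_value (L R : ℝ) (hL : 0 ≤ L) (hR : 0 < R)
    (h : L + 2 * Real.sqrt R < 1) :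
    Summable (fun p : ℕ × ℕ => (BcoefP1 p.1 p.2 : ℝ) * L ^ p.1 * R ^ p.2) ∧
      ∑' p : ℕ × ℕ, (BcoefP1 p.1 p.2 : ℝ) * L ^ p.1 * R ^ p.2 =
        (1 - L - Real.sqrt ((1 - L) ^ 2 - 4 * R)) /
          (2 * R * Real.sqrt ((1 - L) ^ 2 - 4 * R)) := by
  set u := 1 - L
  set x := R / u ^ 2 with hx_def
  have hu : 0 < u := by linarith [Real.sqrt_nonneg R]
  have h4R : 4 * R < u ^ 2 := by nlinarith [Real.sq_sqrt hR.le, Real.sqrt_nonneg R]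
  have hx₀ : 0 < x := by positivity
  have hx : |x| < 1 / 4 := by
    rw [abs_of_pos hx₀, hx_def, div_lt_iff₀ (by positivity)]
    linarith
  have hs : 0 < √(1 - 4 * x) := Real.sqrt_pos.2 (by linarith [le_abs_self x])
  have hD : √(u ^ 2 - 4 * R) = u * √(1 - 4 * x) := by
    rw [show u ^ 2 - 4 * R = u ^ 2 * (1 - 4 * x) by rw [hx_def]; field_simp,
      Real.sqrt_mul (by positivity), Real.sqrt_sq hu.le]
  have hsum : HasSum (fun p : ℕ × ℕ ↦ (BcoefP1 p.1 p.2 : ℝ) * L ^ p.1 * R ^ p.2)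
      ((1 - √(1 - 4 * x)) / (2 * x * √(1 - 4 * x)) / u ^ 2) :=
    hasSum_prod_of_nonneg_of_hasSum_snd (fun p ↦ by positivity)
      (hasSum_BcoefP1_mul_pow_fst (by rw [abs_of_nonneg hL]; linarith) R)
      ((hasSum_choose_two_mul_add_one_mul_pow hx₀.ne' hx).div_const _)
  refine ⟨hsum.summable, hsum.tsum_eq.trans ?_⟩
  rw [hD, hx_def]
  field_simp
end

section
/- For all ℓ, m ∈ ℕ: Br(ℓ, m) = [ℓ = 0 and m = 0] + [ℓ ≥ 1]·Br(ℓ−1, m) + 2·Σ_{ℓ₁+ℓ₂ = ℓ} Σ_{m₁+m₂ = m−1} Exc(ℓ₁, m₁)·Br(ℓ₂, m₂), where [P] is 1 if P holds and 0 otherwise, and the double sum is empty when m = 0. (This is the coefficient form of the equation B = 1 + (t + 2uE)B for the generating function of Motzkin bridges.) -/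
/-- A Motzkin word is a list with entries in `{-1, 0, +1} ⊆ ℤ`. -/
def IsMotzkinWord (w : List ℤ) : Prop := ∀ x ∈ w, x = -1 ∨ x = 0 ∨ x = 1

/-- Motzkin bridges with `ℓ` level steps, `m` down steps and `m` up steps. -/
def MotzkinBridge (l m : ℕ) : Set (List ℤ) :=
  {w | IsMotzkinWord w ∧ w.count 0 = l ∧ w.count (-1) = m ∧ w.count 1 = m}

/-- Motzkin excursions: bridges all of whose prefix sums are nonnegative. -/
def MotzkinExcursion (l m : ℕ) : Set (List ℤ) :=
  {w | w ∈ MotzkinBridge l m ∧ ∀ p : List ℤ, p <+: w → 0 ≤ p.sum}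

/-- Motzkin paths from `0` to `+1` with `ℓ` level steps, `m` down steps and `m+1`
up steps. -/
def MotzkinPathUp (l m : ℕ) : Set (List ℤ) :=
  {w | IsMotzkinWord w ∧ w.count 0 = l ∧ w.count (-1) = m ∧ w.count 1 = m + 1}

/-- The number `Br(ℓ, m)` of Motzkin bridges with parameters `(ℓ, m)`. -/
noncomputable def Br (l m : ℕ) : ℕ := Nat.card (MotzkinBridge l m)

/-- The number `Exc(ℓ, m)` of Motzkin excursions with parameters `(ℓ, m)`. -/
noncomputable def Exc (l m : ℕ) : ℕ := Nat.card (MotzkinExcursion l m)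

/-- The number of Motzkin paths from `0` to `+1` with parameters `(ℓ, m)`. -/
noncomputable def BrUp (l m : ℕ) : ℕ := Nat.card (MotzkinPathUp l m)

/-! First-step decomposition. A nonempty bridge starts with `0`, `+1` or `-1`. Deleting a leading
`0` leaves a bridge. Negating every step exchanges bridges starting with `-1` and with `+1`. A
bridge `1 :: t` has `t.sum = -1`; cutting `t` at the first step where its running sum goes
negative writes `t = e ++ -1 :: b` with `e` an excursion and `b` a bridge, and this cut is unique
because a longer candidate `e'` would have the prefix `e ++ [-1]` of negative sum. -/

open Finset

namespace IsMotzkinWord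

variable {w : List ℤ}

theorem sum_eq (hw : IsMotzkinWord w) : w.sum = w.count 1 - w.count (-1) := by
  induction w with
  | nil => simp
  | cons a t ih =>
    simp only [IsMotzkinWord, List.forall_mem_cons] at hw
    rcases hw.1 with rfl | rfl | rfl <;> simp [ih hw.2] <;> ring

theorem mem_motzkinBridge (hw : IsMotzkinWord w) (h : w.sum = 0) :
    w ∈ MotzkinBridge (w.count 0) (w.count 1) :=
  ⟨hw, rfl, by have := hw.sum_eq; omega, rfl⟩

theorem map_neg (hw : IsMotzkinWord w) : IsMotzkinWord (w.map Neg.neg) := by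
  simp only [IsMotzkinWord, List.forall_mem_map]
  intro x hx
  rcases hw x hx with rfl | rfl | rfl <;> simp

end IsMotzkinWord

theorem List.exists_first_neg_prefix_sum {c : ℤ} (hc : 0 ≤ c) {t : List ℤ} (ht : c + t.sum < 0) :
    ∃ e x b, t = e ++ x :: b ∧ (∀ p, p <+: e → 0 ≤ c + p.sum) ∧ c + e.sum + x < 0 := by
  induction t generalizing c with
  | nil => simp at ht; omega
  | cons a t ih =>
    by_cases ha : c + a < 0
    · exact ⟨[], a, t, rfl, by simpa using hc, by simpa using ha⟩
    obtain ⟨e, x, b, rfl, he, hx⟩ := ih (c := c + a) (by omega) (by simp at ht; omega)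
    refine ⟨a :: e, x, b, rfl, fun p hp => ?_, by simp; omega⟩
    rcases List.prefix_cons_iff.mp hp with rfl | ⟨q, rfl, hq⟩
    · simpa using hc
    · simpa [add_assoc] using he q hq

theorem IsMotzkinWord.exists_eq_append_neg_one_cons {t : List ℤ} (ht : IsMotzkinWord t)
    (hsum : t.sum < 0) :
    ∃ e b, t = e ++ -1 :: b ∧ (∀ p, p <+: e → 0 ≤ p.sum) ∧ e.sum = 0 := by
  obtain ⟨e, x, b, rfl, he, hx⟩ := List.exists_first_neg_prefix_sum le_rfl (by simpa using hsum)
  have he_nonneg : 0 ≤ e.sum := by simpa using he e List.prefix_rfl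
  have hx' : x = -1 ∨ x = 0 ∨ x = 1 := ht x (by simp)
  obtain ⟨rfl, hes⟩ : x = -1 ∧ e.sum = 0 := by omega
  exact ⟨e, b, rfl, by simpa using he, hes⟩

theorem eq_and_eq_of_append_neg_one_cons_eq {e b e' b' : List ℤ}
    (h : e ++ -1 :: b = e' ++ -1 :: b')
    (he : ∀ p, p <+: e → 0 ≤ p.sum) (hes : e.sum = 0)
    (he' : ∀ p, p <+: e' → 0 ≤ p.sum) (hes' : e'.sum = 0) : e = e' ∧ b = b' := by
  wlog hle : e.length ≤ e'.length generalizing e b e' b'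
  · exact (this h.symm he' hes' he hes (by omega)).imp Eq.symm Eq.symm
  have hlen : e.length = e'.length := by
    by_contra hne
    have hpre : e ++ [-1] <+: e' :=
      List.prefix_of_prefix_length_le (l₃ := e' ++ -1 :: b') ⟨b, by simp [h]⟩
        (List.prefix_append _ _) (by simp; omega)
    simpa [hes] using he' _ hpre
  obtain ⟨rfl, hb⟩ := List.append_inj h hlen
  exact ⟨rfl, List.cons_injective hb⟩

section Bridges

variable {l m : ℕ} {w : List ℤ}

theorem zero_cons_mem_motzkinBridge_iff :
    0 :: w ∈ MotzkinBridge (l + 1) m ↔ w ∈ MotzkinBridge l m := by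
  simp [MotzkinBridge, IsMotzkinWord]

theorem map_neg_mem_motzkinBridge (hw : w ∈ MotzkinBridge l m) :
    w.map Neg.neg ∈ MotzkinBridge l m := by
  obtain ⟨hmw, h0, hneg, h1⟩ := hw
  have hcount (x : ℤ) : (w.map Neg.neg).count (-x) = w.count x :=
    List.count_map_of_injective _ _ neg_injective x
  exact ⟨hmw.map_neg, by simpa [h0] using hcount 0, by simpa [h1] using hcount 1,
    by simpa [hneg] using hcount (-1)⟩

theorem sum_eq_zero_of_mem_motzkinBridge (hw : w ∈ MotzkinBridge l m) : w.sum = 0 := by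
  rw [hw.1.sum_eq, hw.2.2.1, hw.2.2.2, sub_self]

theorem one_cons_append_mem_motzkinBridge {l₁ l₂ m₁ m₂ : ℕ} {e b : List ℤ}
    (he : e ∈ MotzkinExcursion l₁ m₁) (hb : b ∈ MotzkinBridge l₂ m₂) :
    1 :: (e ++ -1 :: b) ∈ MotzkinBridge (l₁ + l₂) (m₁ + m₂ + 1) := by
  obtain ⟨⟨hme, he0, heneg, he1⟩, -⟩ := he
  obtain ⟨hmb, hb0, hbneg, hb1⟩ := hb
  refine ⟨?_, ?_, ?_, ?_⟩
  · simp only [IsMotzkinWord, List.forall_mem_cons, List.forall_mem_append] at hme hmb ⊢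
    exact ⟨by simp, hme, by simp, hmb⟩
  all_goals simp [*, add_assoc]

theorem exists_of_one_cons_mem_motzkinBridge {t : List ℤ} (ht : 1 :: t ∈ MotzkinBridge l (m + 1)) :
    ∃ e b, t = e ++ -1 :: b ∧ e ∈ MotzkinExcursion (e.count 0) (e.count 1) ∧
      b ∈ MotzkinBridge (b.count 0) (b.count 1) ∧
      e.count 0 + b.count 0 = l ∧ e.count 1 + b.count 1 = m := by
  obtain ⟨hmw, h0, hneg, h1⟩ := ht
  have hmt : IsMotzkinWord t := fun x hx => hmw x (List.mem_cons_of_mem _ hx)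
  have htsum : t.sum = -1 := by
    have := hmw.sum_eq
    simp at this hneg h1
    omega
  obtain ⟨e, b, rfl, he, hes⟩ := hmt.exists_eq_append_neg_one_cons (by omega)
  have hme : IsMotzkinWord e := fun x hx => hmt x (by simp [hx])
  have hmb : IsMotzkinWord b := fun x hx => hmt x (by simp [hx])
  have hbs : b.sum = 0 := by simpa [hes] using htsum
  refine ⟨e, b, rfl, ⟨hme.mem_motzkinBridge hes, he⟩, hmb.mem_motzkinBridge hbs, ?_, ?_⟩ <;>
    simp at h0 h1 <;> omega

end Bridges

theorem perm_of_mem_motzkinBridge {l m : ℕ} {w : List ℤ} (hw : w ∈ MotzkinBridge l m) :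
    w.Perm (List.replicate l 0 ++ List.replicate m (-1) ++ List.replicate m 1) := by
  obtain ⟨hmw, h0, hneg, h1⟩ := hw
  refine List.perm_iff_count.mpr fun x => ?_
  by_cases hx : x = -1 ∨ x = 0 ∨ x = 1
  · rcases hx with rfl | rfl | rfl <;> simp [List.count_replicate, *]
  · rw [List.count_eq_zero.mpr fun hmem => hx (hmw x hmem), List.count_eq_zero.mpr]
    simp only [List.mem_append, List.mem_replicate]
    tauto

theorem motzkinBridge_finite (l m : ℕ) : (MotzkinBridge l m).Finite :=
  (List.permutations _).toFinset.finite_toSet.subset fun _ hw => by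
    simpa using (perm_of_mem_motzkinBridge hw)

theorem motzkinExcursion_finite (l m : ℕ) : (MotzkinExcursion l m).Finite :=
  (motzkinBridge_finite l m).subset fun _ hw => hw.1

theorem card_eq_add_card_filter_head (s : Finset (List ℤ)) (hs : ∀ w ∈ s, IsMotzkinWord w) :
    #s = #{w ∈ s | w.head? = none} + #{w ∈ s | w.head? = some 0} +
      #{w ∈ s | w.head? = some 1} + #{w ∈ s | w.head? = some (-1)} := by
  have hmaps : Set.MapsTo List.head? s
      (({none, some 0, some 1, some (-1)} : Finset (Option ℤ)) : Set (Option ℤ)) := by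
    intro w hw
    rcases w with _ | ⟨a, t⟩
    · simp
    · rcases hs _ hw a (by simp) with rfl | rfl | rfl <;> simp
  rw [card_eq_sum_card_fiberwise hmaps]
  simp [add_assoc]

theorem filter_head_eq_empty {s : Finset (List ℤ)} {a : ℤ} (h : ∀ w ∈ s, w.count a = 0) :
    {w ∈ s | w.head? = some a} = ∅ :=
  filter_eq_empty_iff.mpr fun w hw hhead =>
    (List.count_pos_iff.mpr (List.mem_of_mem_head? hhead)).ne' (h w hw)

noncomputable def bridgeFinset (l m : ℕ) : Finset (List ℤ) := (motzkinBridge_finite l m).toFinset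

noncomputable def excursionFinset (l m : ℕ) : Finset (List ℤ) :=
  (motzkinExcursion_finite l m).toFinset

noncomputable def excursionBridgePairs (l m : ℕ) :
    Finset (Σ _ : (ℕ × ℕ) × (ℕ × ℕ), List ℤ × List ℤ) :=
  (antidiagonal l ×ˢ antidiagonal m).sigma fun pq =>
    excursionFinset pq.1.1 pq.2.1 ×ˢ bridgeFinset pq.1.2 pq.2.2

section Fibers

variable {l m : ℕ} {w : List ℤ}

@[simp]
theorem mem_bridgeFinset : w ∈ bridgeFinset l m ↔ w ∈ MotzkinBridge l m :=
  Set.Finite.mem_toFinset _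

@[simp]
theorem mem_excursionFinset : w ∈ excursionFinset l m ↔ w ∈ MotzkinExcursion l m :=
  Set.Finite.mem_toFinset _

theorem mem_excursionBridgePairs {l₁ l₂ m₁ m₂ : ℕ} {e b : List ℤ} :
    ⟨((l₁, l₂), (m₁, m₂)), (e, b)⟩ ∈ excursionBridgePairs l m ↔
      (l₁ + l₂ = l ∧ m₁ + m₂ = m) ∧ e ∈ MotzkinExcursion l₁ m₁ ∧ b ∈ MotzkinBridge l₂ m₂ := by
  simp [excursionBridgePairs]

variable (l m)

theorem card_bridgeFinset : #(bridgeFinset l m) = Br l m :=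
  (Nat.card_eq_card_finite_toFinset _).symm

theorem card_excursionFinset : #(excursionFinset l m) = Exc l m :=
  (Nat.card_eq_card_finite_toFinset _).symm

theorem card_filter_head_none :
    #{w ∈ bridgeFinset l m | w.head? = none} = if l = 0 ∧ m = 0 then 1 else 0 := by
  have hnil : [] ∈ MotzkinBridge l m ↔ l = 0 ∧ m = 0 := by
    simp [MotzkinBridge, IsMotzkinWord, eq_comm]
  split_ifs with h
  · refine card_eq_one.mpr ⟨[], ext fun w => ?_⟩
    simp only [mem_filter, mem_bridgeFinset, List.head?_eq_none_iff, mem_singleton]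
    exact ⟨And.right, by rintro rfl; exact ⟨hnil.mpr h, rfl⟩⟩
  · refine card_eq_zero.mpr (filter_eq_empty_iff.mpr fun w hw hhead => h ?_)
    rw [List.head?_eq_none_iff] at hhead
    exact hnil.mp (hhead ▸ mem_bridgeFinset.mp hw)

theorem card_filter_head_zero :
    #{w ∈ bridgeFinset l m | w.head? = some 0} = if 1 ≤ l then Br (l - 1) m else 0 := by
  rcases l with _ | l
  · rw [filter_head_eq_empty fun w hw => (mem_bridgeFinset.mp hw).2.1]
    rfl
  rw [if_pos (by omega), Nat.add_sub_cancel, ← card_bridgeFinset]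
  have himage : {w ∈ bridgeFinset (l + 1) m | w.head? = some 0} =
      (bridgeFinset l m).map ⟨List.cons 0, List.cons_injective⟩ := by
    ext w
    simp only [mem_filter, mem_map, mem_bridgeFinset, List.head?_eq_some_iff,
      Function.Embedding.coeFn_mk]
    constructor
    · rintro ⟨hw, t, rfl⟩
      exact ⟨t, zero_cons_mem_motzkinBridge_iff.mp hw, rfl⟩
    · rintro ⟨t, ht, rfl⟩
      exact ⟨zero_cons_mem_motzkinBridge_iff.mpr ht, t, rfl⟩
  rw [himage, card_map]

theorem card_filter_head_neg_one :
    #{w ∈ bridgeFinset l m | w.head? = some (-1)} = #{w ∈ bridgeFinset l m | w.head? = some 1} := by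
  have hneg (a : ℤ) (w : List ℤ) (hw : w ∈ {w ∈ bridgeFinset l m | w.head? = some a}) :
      w.map Neg.neg ∈ {w ∈ bridgeFinset l m | w.head? = some (-a)} := by
    simp only [mem_filter, mem_bridgeFinset, List.head?_map] at hw ⊢
    exact ⟨map_neg_mem_motzkinBridge hw.1, by simp [hw.2]⟩
  exact card_nbij' (List.map Neg.neg) (List.map Neg.neg) (fun w hw => by simpa using hneg (-1) w hw)
    (fun w hw => hneg 1 w hw) (fun w _ => by simp) (fun w _ => by simp)

theorem card_excursionBridgePairs :
    #(excursionBridgePairs l m) =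
      ∑ p ∈ antidiagonal l, ∑ q ∈ antidiagonal m, Exc p.1 q.1 * Br p.2 q.2 := by
  simp only [excursionBridgePairs, card_sigma, sum_product, card_product, card_excursionFinset,
    card_bridgeFinset]

theorem card_excursionBridgePairs_eq_card_filter_head_one :
    #(excursionBridgePairs l m) = #{w ∈ bridgeFinset l (m + 1) | w.head? = some 1} := by
  refine card_nbij (fun x => 1 :: (x.2.1 ++ -1 :: x.2.2)) ?_ ?_ ?_
  · rintro ⟨⟨⟨l₁, l₂⟩, ⟨m₁, m₂⟩⟩, ⟨e, b⟩⟩ hx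
    obtain ⟨⟨rfl, rfl⟩, he, hb⟩ := mem_excursionBridgePairs.mp hx
    simpa using one_cons_append_mem_motzkinBridge he hb
  · rintro ⟨⟨⟨l₁, l₂⟩, ⟨m₁, m₂⟩⟩, ⟨e, b⟩⟩ hx ⟨⟨⟨l₁', l₂'⟩, ⟨m₁', m₂'⟩⟩, ⟨e', b'⟩⟩ hx' h
    obtain ⟨-, he, hb⟩ := mem_excursionBridgePairs.mp hx
    obtain ⟨-, he', hb'⟩ := mem_excursionBridgePairs.mp hx'
    obtain ⟨rfl, rfl⟩ := eq_and_eq_of_append_neg_one_cons_eq (List.cons_injective h)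
      he.2 (sum_eq_zero_of_mem_motzkinBridge he.1) he'.2 (sum_eq_zero_of_mem_motzkinBridge he'.1)
    obtain ⟨⟨-, rfl, -, rfl⟩, -⟩ := he
    obtain ⟨⟨-, rfl, -, rfl⟩, -⟩ := he'
    obtain ⟨-, rfl, -, rfl⟩ := hb
    obtain ⟨-, rfl, -, rfl⟩ := hb'
    rfl
  · intro w hw
    simp only [mem_coe, mem_filter, mem_bridgeFinset, List.head?_eq_some_iff] at hw
    obtain ⟨hw, t, rfl⟩ := hw
    obtain ⟨e, b, rfl, he, hb, hl, hm⟩ := exists_of_one_cons_mem_motzkinBridge hw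
    exact ⟨⟨((e.count 0, b.count 0), (e.count 1, b.count 1)), (e, b)⟩,
      mem_excursionBridgePairs.mpr ⟨⟨hl, hm⟩, he, hb⟩, rfl⟩

theorem card_filter_head_one :
    #{w ∈ bridgeFinset l m | w.head? = some 1} =
      if 1 ≤ m then
        ∑ p ∈ antidiagonal l, ∑ q ∈ antidiagonal (m - 1), Exc p.1 q.1 * Br p.2 q.2
      else 0 := by
  rcases m with _ | m
  · rw [filter_head_eq_empty fun w hw => (mem_bridgeFinset.mp hw).2.2.2]
    rfl
  rw [if_pos (by omega), Nat.add_sub_cancel, ← card_excursionBridgePairs,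
    card_excursionBridgePairs_eq_card_filter_head_one]

end Fibers

/-- Coefficient form of `B = 1 + (t + 2uE)B` for Motzkin bridges. -/
theorem bridge_recurrence (l m : ℕ) :
    Br l m =
      (if l = 0 ∧ m = 0 then 1 else 0) +
        (if 1 ≤ l then Br (l - 1) m else 0) +
        2 * (if 1 ≤ m then
          ∑ p ∈ Finset.HasAntidiagonal.antidiagonal l, ∑ q ∈ Finset.HasAntidiagonal.antidiagonal (m - 1),
            Exc p.1 q.1 * Br p.2 q.2
        else 0) := by
  rw [← card_bridgeFinset, card_eq_add_card_filter_head _ fun w hw => (mem_bridgeFinset.mp hw).1,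
    card_filter_head_neg_one, card_filter_head_none, card_filter_head_zero, card_filter_head_one]
  ring
end

section
/- Let L, R be real numbers with L ≥ 0, R ≥ 0 and L + 2√R < 1, and let k ∈ ℕ. Then the family (ℓ, m) ∈ ℕ×ℕ ↦ (ℓ+m)^k·B_{ℓ,m}·L^ℓ·R^m is summable. -/
lemma Bcoef_eq (l m : ℕ) : Bcoef l m = (l + 2 * m).choose l * (2 * m).choose m := by
  have h1 : (l + 2 * m).choose l * l.factorial * (2 * m).factorial
      = (l + 2 * m).factorial := by
    have := Nat.choose_mul_factorial_mul_factorial (Nat.le_add_right l (2 * m))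
    simpa using this
  have h2 : (2 * m).choose m * m.factorial * m.factorial = (2 * m).factorial := by
    have := Nat.choose_mul_factorial_mul_factorial (show m ≤ 2 * m by omega)
    simpa [two_mul] using this
  have key : (l + 2 * m).factorial
      = ((l + 2 * m).choose l * (2 * m).choose m) * (l.factorial * m.factorial * m.factorial) := by
    rw [← h1, ← h2]; ring
  have hpos : 0 < l.factorial * m.factorial * m.factorial :=
    Nat.mul_pos (Nat.mul_pos l.factorial_pos m.factorial_pos) m.factorial_pos
  rw [Bcoef, key, Nat.mul_div_cancel _ hpos]

lemma choose_term_le (x y : ℝ) (hx : 0 ≤ x) (hy : 0 ≤ y) {n i : ℕ} (hi : i ≤ n) :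
    (n.choose i : ℝ) * x ^ i * y ^ (n - i) ≤ (x + y) ^ n := by
  rw [add_pow]
  have hmem : i ∈ Finset.range (n + 1) := Finset.mem_range.2 (Nat.lt_succ_of_le hi)
  calc (n.choose i : ℝ) * x ^ i * y ^ (n - i) = x ^ i * y ^ (n - i) * n.choose i := by ring
    _ ≤ ∑ j ∈ Finset.range (n + 1), x ^ j * y ^ (n - j) * n.choose j := by
        exact Finset.single_le_sum (f := fun j => x ^ j * y ^ (n - j) * (n.choose j : ℝ))
          (fun j _ => by positivity) hmem

set_option maxHeartbeats 1000000 in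
/-- For `L, R ≥ 0` with `L + 2√R < 1` and any `k`, the family
`(ℓ+m)^k·B_{ℓ,m}·L^ℓ·R^m` is summable. -/
theorem summable_weighted_bridge (L R : ℝ) (hL : 0 ≤ L) (hR : 0 ≤ R)
    (h : L + 2 * Real.sqrt R < 1) (k : ℕ) :
    Summable (fun p : ℕ × ℕ =>
      ((p.1 + p.2 : ℕ) : ℝ) ^ k * (Bcoef p.1 p.2 : ℝ) * L ^ p.1 * R ^ p.2) := by
  set s := Real.sqrt R with hs
  have hs0 : 0 ≤ s := Real.sqrt_nonneg R
  set q : ℝ := L + 2 * s with hq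
  have hq0 : 0 ≤ q := by positivity
  have hq1 : q < 1 := h
  -- summable majorant
  have hnk : ∀ j : ℕ, Summable (fun n : ℕ => (n : ℝ) ^ j * q ^ n) := fun j =>
    summable_pow_mul_geometric_of_norm_lt_one j (by rwa [Real.norm_of_nonneg hq0])
  have hgeom : Summable (fun n : ℕ => q ^ n) :=
    summable_geometric_of_lt_one hq0 hq1
  have hg : Summable (fun p : ℕ × ℕ =>
      (2 : ℝ) ^ k * ((p.1 : ℝ) ^ k * q ^ p.1 * q ^ p.2 + q ^ p.1 * ((p.2 : ℝ) ^ k * q ^ p.2))) := by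
    refine Summable.mul_left _ (Summable.add ?_ ?_)
    · exact Summable.mul_of_nonneg (hnk k) hgeom
        (fun n => by positivity) (fun n => by positivity)
    · exact Summable.mul_of_nonneg hgeom (hnk k)
        (fun n => by positivity) (fun n => by positivity)
  refine Summable.of_nonneg_of_le (fun p => by positivity) (fun p => ?_) hg
  obtain ⟨l, m⟩ := p
  simp only
  -- the basic bound: B * L^l * R^m ≤ q^(l+2m)
  have hRs : R = s ^ 2 := (Real.sq_sqrt hR).symm
  have hB : (Bcoef l m : ℝ) * L ^ l * R ^ m ≤ q ^ (l + m) := by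
    have step1 : ((2 * m).choose m : ℝ) * s ^ m * s ^ m ≤ (2 * s) ^ (2 * m) := by
      have := choose_term_le s s hs0 hs0 (show m ≤ 2 * m by omega)
      have h2 : 2 * m - m = m := by omega
      rw [h2] at this
      calc ((2 * m).choose m : ℝ) * s ^ m * s ^ m ≤ (s + s) ^ (2 * m) := this
        _ = (2 * s) ^ (2 * m) := by ring_nf
    have step2 : ((l + 2 * m).choose l : ℝ) * L ^ l * (2 * s) ^ (2 * m) ≤ q ^ (l + 2 * m) := by
      have := choose_term_le L (2 * s) hL (by positivity) (Nat.le_add_right l (2 * m))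
      have h2 : l + 2 * m - l = 2 * m := by omega
      rwa [h2] at this
    have hRm : R ^ m = s ^ m * s ^ m := by
      rw [hRs, ← pow_mul]; rw [← pow_add]; ring_nf
    calc (Bcoef l m : ℝ) * L ^ l * R ^ m
        = ((l + 2 * m).choose l : ℝ) * L ^ l * (((2 * m).choose m : ℝ) * s ^ m * s ^ m) := by
          rw [Bcoef_eq, hRm]; push_cast; ring
      _ ≤ ((l + 2 * m).choose l : ℝ) * L ^ l * (2 * s) ^ (2 * m) := by
          apply mul_le_mul_of_nonneg_left step1
          positivity
      _ ≤ q ^ (l + 2 * m) := step2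
      _ ≤ q ^ (l + m) := pow_le_pow_of_le_one hq0 hq1.le (by omega)
  have hpow : ((l + m : ℕ) : ℝ) ^ k ≤ 2 ^ k * ((l : ℝ) ^ k + (m : ℝ) ^ k) := by
    have h1 : ((l + m : ℕ) : ℝ) ≤ 2 * max (l : ℝ) (m : ℝ) := by
      push_cast
      rcases le_total (l : ℝ) (m : ℝ) with hlm | hlm
      · rw [max_eq_right hlm]; linarith
      · rw [max_eq_left hlm]; linarith
    calc ((l + m : ℕ) : ℝ) ^ k ≤ (2 * max (l : ℝ) (m : ℝ)) ^ k := by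
          apply pow_le_pow_left₀ (by positivity) h1
      _ = 2 ^ k * (max (l : ℝ) (m : ℝ)) ^ k := by rw [mul_pow]
      _ ≤ 2 ^ k * ((l : ℝ) ^ k + (m : ℝ) ^ k) := by
          apply mul_le_mul_of_nonneg_left _ (by positivity)
          rcases le_total (l : ℝ) (m : ℝ) with hlm | hlm
          · rw [max_eq_right hlm]
            linarith [pow_nonneg (Nat.cast_nonneg l : (0:ℝ) ≤ l) k]
          · rw [max_eq_left hlm]
            linarith [pow_nonneg (Nat.cast_nonneg m : (0:ℝ) ≤ m) k]
  calc ((l + m : ℕ) : ℝ) ^ k * (Bcoef l m : ℝ) * L ^ l * R ^ m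
      = ((l + m : ℕ) : ℝ) ^ k * ((Bcoef l m : ℝ) * L ^ l * R ^ m) := by ring
    _ ≤ (2 ^ k * ((l : ℝ) ^ k + (m : ℝ) ^ k)) * q ^ (l + m) := by
        apply mul_le_mul hpow hB (by positivity) (by positivity)
    _ = 2 ^ k * ((l : ℝ) ^ k * q ^ l * q ^ m + q ^ l * ((m : ℝ) ^ k * q ^ m)) := by
        rw [pow_add]; ring
end

section
/- Let t, u be real numbers with t ≥ 0, u > 0 and t + 2√u < 1. Then the family (ℓ, m) ∈ ℕ×ℕ ↦ Exc(ℓ, m)·t^ℓ·u^m is summable and Σ_{ℓ,m ≥ 0} Exc(ℓ, m)·t^ℓ·u^m = (1 − t − √((1−t)² − 4u)) / (2u). -/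
/-!
Give a word `w` the weight `t ^ (#0 in w) * u ^ (#-1 in w)`, so that the series is the total
weight `F` of all excursions. Cutting a nonempty excursion at its first step, and, if that step
is `+1`, at its first return to height `0`, writes it uniquely as `0 :: v` or
`1 :: (a ++ -1 :: b)` with `v, a, b` excursions. In `ℝ≥0∞` this gives `1 + t F + u F² ≤ F`, and,
by induction on the length, `F ≤ R` for every `R` with `1 + t R + u R² ≤ R`, in particular for the
smaller root `r` of `u x² - (1 - t) x + 1`. As the quadratic is positive below `r`, `F = r`.
-/

open scoped ENNReal

lemma ENNReal.tsum_set_prod_mul {α β : Type*} (s : Set α) (t : Set β) (f : α → ℝ≥0∞)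
    (g : β → ℝ≥0∞) :
    ∑' x : ↥(s ×ˢ t), f x.1.1 * g x.1.2 = (∑' x : s, f x) * ∑' y : t, g y := by
  rw [← (Equiv.Set.prod s t).symm.tsum_eq, ENNReal.tsum_prod', ← ENNReal.tsum_mul_right]
  exact tsum_congr fun a => ENNReal.tsum_mul_left (a := f a) (f := fun b : t => g b)

lemma ENNReal.tsum_le_of_forall_tsum_sublevel_le {α : Type*} {f : α → ℝ≥0∞} {s : Set α}
    (g : α → ℕ) {c : ℝ≥0∞} (h : ∀ n, ∑' x : {x ∈ s | g x < n}, f x ≤ c) :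
    ∑' x : s, f x ≤ c := by
  rw [ENNReal.tsum_eq_iSup_sum]
  refine iSup_le fun u => ?_
  calc ∑ x ∈ u, f x = ∑' x : (u : Set s), f x := (Finset.tsum_subtype u _).symm
    _ = ∑' y : Subtype.val '' (u : Set s), f y := (tsum_image f Subtype.val_injective.injOn).symm
    _ ≤ ∑' x : {x ∈ s | g x < u.sup (g ∘ Subtype.val) + 1}, f x := by
      refine ENNReal.tsum_mono_subtype f ?_
      rintro _ ⟨x, hx, rfl⟩
      exact ⟨x.2, Nat.lt_succ_of_le (Finset.le_sup (f := g ∘ Subtype.val) hx)⟩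
    _ ≤ c := h _

lemma ENNReal.ofReal_one_add_mul_add_mul_sq {t u x : ℝ} (ht : 0 ≤ t) (hu : 0 ≤ u) (hx : 0 ≤ x) :
    ENNReal.ofReal (1 + t * x + u * x ^ 2) =
      1 + ENNReal.ofReal t * ENNReal.ofReal x + ENNReal.ofReal u * ENNReal.ofReal x ^ 2 := by
  rw [ENNReal.ofReal_add (by positivity) (by positivity), ENNReal.ofReal_add zero_le_one
    (by positivity), ENNReal.ofReal_one, ENNReal.ofReal_mul ht, ENNReal.ofReal_mul hu,
    ENNReal.ofReal_pow hx]

lemma hasSum_of_tsum_ofReal_eq {α : Type*} {f : α → ℝ} {r : ℝ} (hf : ∀ a, 0 ≤ f a) (hr : 0 ≤ r)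
    (h : ∑' a, ENNReal.ofReal (f a) = ENNReal.ofReal r) : HasSum f r := by
  have hsum := ENNReal.hasSum_toReal (h ▸ ENNReal.ofReal_ne_top)
  rwa [← ENNReal.tsum_toReal_eq fun _ => ENNReal.ofReal_ne_top, h, ENNReal.toReal_ofReal hr,
    funext fun a => ENNReal.toReal_ofReal (hf a)] at hsum

namespace Motzkin

def StaysNonneg (c : ℤ) (w : List ℤ) : Prop := ∀ p, p <+: w → 0 ≤ c + p.sum

@[simp]
lemma staysNonneg_nil {c : ℤ} : StaysNonneg c [] ↔ 0 ≤ c := by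
  simp [StaysNonneg]

@[simp]
lemma staysNonneg_cons {c x : ℤ} {w : List ℤ} :
    StaysNonneg c (x :: w) ↔ 0 ≤ c ∧ StaysNonneg (c + x) w := by
  simp only [StaysNonneg, List.prefix_cons_iff]
  constructor
  · intro h
    exact ⟨by simpa using h [] (.inl rfl), fun p hp => by
      simpa [add_assoc] using h (x :: p) (.inr ⟨p, rfl, hp⟩)⟩
  · rintro ⟨hc, h⟩ p (rfl | ⟨q, rfl, hq⟩)
    · simpa using hc
    · simpa [add_assoc] using h q hq

lemma StaysNonneg.nonneg {c : ℤ} {w : List ℤ} (h : StaysNonneg c w) : 0 ≤ c := by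
  simpa using h [] List.nil_prefix

@[simp]
lemma staysNonneg_append {c : ℤ} {a b : List ℤ} :
    StaysNonneg c (a ++ b) ↔ StaysNonneg c a ∧ StaysNonneg (c + a.sum) b := by
  induction a generalizing c with
  | nil => simpa using fun h : StaysNonneg c b => h.nonneg
  | cons x a ih => simp [ih, add_assoc, and_assoc]

lemma StaysNonneg.add_sum_nonneg {c : ℤ} {w : List ℤ} (h : StaysNonneg c w) : 0 ≤ c + w.sum :=
  h w List.prefix_rfl

lemma StaysNonneg.mono {c d : ℤ} {w : List ℤ} (h : StaysNonneg c w) (hcd : c ≤ d) :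
    StaysNonneg d w :=
  fun p hp => (h p hp).trans (by omega)

lemma exists_first_passage {c : ℤ} {v : List ℤ} (hv : ∀ x ∈ v, -1 ≤ x) (hc : 0 ≤ c)
    (h : ¬StaysNonneg c v) :
    ∃ p q, v = p ++ -1 :: q ∧ c + p.sum = 0 ∧ StaysNonneg c p := by
  induction v generalizing c with
  | nil => exact absurd (staysNonneg_nil.2 hc) h
  | cons x v ih =>
    simp only [List.mem_cons, forall_eq_or_imp] at hv
    simp only [staysNonneg_cons, hc, true_and] at h
    by_cases hx : 0 ≤ c + x
    · obtain ⟨p, q, rfl, hp, hnn⟩ := ih hv.2 hx h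
      exact ⟨x :: p, q, rfl, by simpa [add_assoc] using hp, by simp [hc, hnn]⟩
    · exact ⟨[], v, by rw [show x = -1 by omega]; rfl, by simp; omega, by simpa using hc⟩

@[simp]
lemma isMotzkinWord_nil : IsMotzkinWord [] := by simp [IsMotzkinWord]

@[simp]
lemma isMotzkinWord_cons {x : ℤ} {w : List ℤ} :
    IsMotzkinWord (x :: w) ↔ (x = -1 ∨ x = 0 ∨ x = 1) ∧ IsMotzkinWord w := by
  simp [IsMotzkinWord]

@[simp]
lemma isMotzkinWord_append {a b : List ℤ} :
    IsMotzkinWord (a ++ b) ↔ IsMotzkinWord a ∧ IsMotzkinWord b := by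
  simp [IsMotzkinWord, or_imp, forall_and]

lemma IsMotzkinWord.sum_eq {w : List ℤ} (hw : IsMotzkinWord w) :
    w.sum = w.count 1 - w.count (-1) := by
  induction w with
  | nil => simp
  | cons x w ih =>
    obtain ⟨hx | hx | hx, hw⟩ := isMotzkinWord_cons.1 hw <;>
      simp [hx, ih hw] <;> ring

lemma IsMotzkinWord.length_eq {w : List ℤ} (hw : IsMotzkinWord w) :
    w.length = w.count 0 + w.count (-1) + w.count 1 := by
  induction w with
  | nil => simp
  | cons x w ih =>
    obtain ⟨hx | hx | hx, hw⟩ := isMotzkinWord_cons.1 hw <;>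
      simp [hx, ih hw] <;> ring

def excursions : Set (List ℤ) := {w | IsMotzkinWord w ∧ w.sum = 0 ∧ StaysNonneg 0 w}

lemma mem_motzkinExcursion {l m : ℕ} {w : List ℤ} :
    w ∈ MotzkinExcursion l m ↔ w ∈ excursions ∧ w.count 0 = l ∧ w.count (-1) = m := by
  simp only [MotzkinExcursion, MotzkinBridge, excursions, StaysNonneg, zero_add,
    Set.mem_ofPred_eq]
  constructor
  · rintro ⟨⟨hw, h0, hm, h1⟩, hnn⟩
    exact ⟨⟨hw, by rw [IsMotzkinWord.sum_eq hw, hm, h1, sub_self], hnn⟩, h0, hm⟩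
  · rintro ⟨⟨hw, hsum, hnn⟩, h0, hm⟩
    refine ⟨⟨hw, h0, hm, ?_⟩, hnn⟩
    have := IsMotzkinWord.sum_eq hw
    omega

lemma motzkinExcursion_finite (l m : ℕ) : (MotzkinExcursion l m).Finite := by
  refine ((List.finite_length_eq ({-1, 0, 1} : Set ℤ) (l + 2 * m)).image
    (List.map Subtype.val)).subset ?_
  rintro w ⟨⟨hw, h0, hm, h1⟩, -⟩
  have hlen := IsMotzkinWord.length_eq hw
  lift w to List ({-1, 0, 1} : Set ℤ) using hw
  exact ⟨w, by simp only [List.length_map, Set.mem_ofPred_eq] at hlen ⊢; omega, rfl⟩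

@[simp]
lemma cons_zero_mem_excursions {w : List ℤ} : 0 :: w ∈ excursions ↔ w ∈ excursions := by
  simp [excursions]

def glue (a b : List ℤ) : List ℤ := 1 :: (a ++ -1 :: b)

lemma glue_mem_excursions {a b : List ℤ} (ha : a ∈ excursions) (hb : b ∈ excursions) :
    glue a b ∈ excursions := by
  obtain ⟨ha, hsa, hna⟩ := ha
  obtain ⟨hb, hsb, hnb⟩ := hb
  simp [excursions, glue, ha, hb, hsa, hsb, hnb, hna.mono zero_le_one]

lemma eq_nil_of_cons_neg_one_eq_append {a d b b' : List ℤ} (ha : a.sum = 0)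
    (hnn : StaysNonneg 0 (a ++ d)) (h : -1 :: b = d ++ -1 :: b') : d = [] := by
  obtain _ | ⟨x, d⟩ := d
  · rfl
  · obtain ⟨rfl, -⟩ := List.cons_eq_cons.1 h
    simp only [staysNonneg_append, ha, add_zero, staysNonneg_cons] at hnn
    exact absurd hnn.2.2.nonneg (by norm_num)

lemma glue_injOn : Set.InjOn (Function.uncurry glue) (excursions ×ˢ Set.univ) := by
  rintro ⟨a, b⟩ ⟨⟨-, ha, hna⟩, -⟩ ⟨a', b'⟩ ⟨⟨-, ha', hna'⟩, -⟩ h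
  simp only [Function.uncurry_apply_pair, glue, List.cons_eq_cons, true_and] at h
  rcases List.append_eq_append_iff.1 h with ⟨d, rfl, hd⟩ | ⟨d, rfl, hd⟩
  · obtain rfl := eq_nil_of_cons_neg_one_eq_append ha hna' hd
    simp_all
  · obtain rfl := eq_nil_of_cons_neg_one_eq_append ha' hna hd
    simp_all

lemma eq_nil_or_cons_zero_or_glue {w : List ℤ} (hw : w ∈ excursions) :
    w = [] ∨ (∃ v ∈ excursions, w = 0 :: v) ∨
      ∃ a ∈ excursions, ∃ b ∈ excursions, w = glue a b := by
  obtain _ | ⟨x, v⟩ := w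
  · exact .inl rfl
  obtain ⟨hw, hsum, hnn⟩ := hw
  simp only [isMotzkinWord_cons, staysNonneg_cons, le_refl, true_and, zero_add] at hw hnn
  obtain ⟨rfl | rfl | rfl, hv⟩ := hw
  · exact absurd hnn.nonneg (by norm_num)
  · exact .inr (.inl ⟨v, by simp_all [excursions], rfl⟩)
  right; right
  have hv_sum : v.sum = -1 := by
    rw [List.sum_cons] at hsum
    omega
  have hdip : ¬StaysNonneg 0 v := fun h => by simpa [hv_sum] using h.add_sum_nonneg
  obtain ⟨a, b, rfl, ha, hna⟩ :=
    exists_first_passage (fun x hx => by rcases hv x hx with h | h | h <;> omega) le_rfl hdip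
  rw [zero_add] at ha
  simp only [staysNonneg_append, ha, staysNonneg_cons] at hnn
  simp only [isMotzkinWord_append, isMotzkinWord_cons] at hv
  refine ⟨a, ⟨hv.1, ha, hna⟩, b, ⟨hv.2.2, ?_, by simpa using hnn.2.2⟩, rfl⟩
  simpa [ha] using hv_sum

/-- One unfolding of the grammar `E ::= ε | 0 E | +1 E -1 E` of excursions. -/
def grammarStep (A : Set (List ℤ)) : Set (List ℤ) :=
  insert [] (List.cons 0 '' A ∪ Function.uncurry glue '' A ×ˢ A)

lemma grammarStep_excursions_subset : grammarStep excursions ⊆ excursions := by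
  rintro w (rfl | ⟨v, hv, rfl⟩ | ⟨⟨a, b⟩, ⟨ha, hb⟩, rfl⟩)
  · simp [excursions]
  · exact cons_zero_mem_excursions.2 hv
  · exact glue_mem_excursions ha hb

lemma excursions_length_lt_succ_subset (n : ℕ) :
    {w ∈ excursions | w.length < n + 1} ⊆ grammarStep {w ∈ excursions | w.length < n} := by
  rintro w ⟨hw, hlen⟩
  rcases eq_nil_or_cons_zero_or_glue hw with rfl | ⟨v, hv, rfl⟩ | ⟨a, ha, b, hb, rfl⟩
  · exact Set.mem_insert _ _
  · exact .inr (.inl ⟨v, ⟨hv, by simpa using hlen⟩, rfl⟩)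
  · simp only [glue, List.length_cons, List.length_append] at hlen
    exact .inr (.inr ⟨(a, b), ⟨⟨ha, show a.length < n by omega⟩, hb, show b.length < n by omega⟩,
      rfl⟩)

noncomputable def weight (T U : ℝ≥0∞) (w : List ℤ) : ℝ≥0∞ := T ^ w.count 0 * U ^ w.count (-1)

section Weight

variable {T U : ℝ≥0∞}

@[simp]
lemma weight_nil : weight T U [] = 1 := by simp [weight]

@[simp]
lemma weight_cons_zero (w : List ℤ) : weight T U (0 :: w) = T * weight T U w := by
  simp only [weight, List.count_cons_self, ne_eq, zero_eq_neg, one_ne_zero, not_false_eq_true,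
    List.count_cons_of_ne, pow_succ]
  ring

@[simp]
lemma weight_glue (a b : List ℤ) :
    weight T U (glue a b) = U * (weight T U a * weight T U b) := by
  simp only [weight, glue, ne_eq, one_ne_zero, not_false_eq_true, List.count_cons_of_ne,
    List.count_append, neg_eq_zero, pow_add, reduceCtorEq, List.count_cons_self, pow_succ]
  ring

lemma tsum_weight_grammarStep {A : Set (List ℤ)} (hA : A ⊆ excursions) :
    ∑' w : grammarStep A, weight T U w =
      1 + T * ∑' w : A, weight T U w + U * (∑' w : A, weight T U w) ^ 2 := by
  have hnil : Disjoint {[]} (List.cons 0 '' A ∪ Function.uncurry glue '' A ×ˢ A) := by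
    simp [glue]
  have hheads : Disjoint (List.cons 0 '' A) (Function.uncurry glue '' A ×ˢ A) := by
    simp [Set.disjoint_left, glue]
  have hglue : Set.InjOn (Function.uncurry glue) (A ×ˢ A) :=
    glue_injOn.mono (Set.prod_mono hA (Set.subset_univ _))
  rw [grammarStep, Set.insert_eq, ENNReal.summable.tsum_union_disjoint hnil ENNReal.summable,
    ENNReal.summable.tsum_union_disjoint hheads ENNReal.summable, tsum_singleton,
    tsum_image _ List.cons_injective.injOn, tsum_image _ hglue]
  simp only [weight_nil, weight_cons_zero, Function.uncurry, weight_glue, ENNReal.tsum_mul_left,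
    ENNReal.tsum_set_prod_mul, sq, add_assoc]

lemma tsum_weight_excursions_le {R : ℝ≥0∞} (hR : 1 + T * R + U * R ^ 2 ≤ R) :
    ∑' w : excursions, weight T U w ≤ R := by
  refine ENNReal.tsum_le_of_forall_tsum_sublevel_le List.length fun n => ?_
  induction n with
  | zero => simp
  | succ n ih =>
    calc ∑' w : {w ∈ excursions | w.length < n + 1}, weight T U w
        ≤ ∑' w : grammarStep {w ∈ excursions | w.length < n}, weight T U w :=
          ENNReal.tsum_mono_subtype _ (excursions_length_lt_succ_subset n)
      _ ≤ 1 + T * R + U * R ^ 2 := by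
          rw [tsum_weight_grammarStep (Set.sep_subset _ _)]
          gcongr
      _ ≤ R := hR

lemma le_tsum_weight_excursions :
    1 + T * ∑' w : excursions, weight T U w + U * (∑' w : excursions, weight T U w) ^ 2 ≤
      ∑' w : excursions, weight T U w := by
  rw [← tsum_weight_grammarStep subset_rfl]
  exact ENNReal.tsum_mono_subtype _ grammarStep_excursions_subset

lemma tsum_weight_motzkinExcursion (l m : ℕ) :
    ∑' w : MotzkinExcursion l m, weight T U w = Exc l m * T ^ l * U ^ m := by
  have hw : ∀ w : MotzkinExcursion l m, weight T U w = T ^ l * U ^ m := fun ⟨w, hw⟩ => by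
    obtain ⟨-, h0, hm⟩ := mem_motzkinExcursion.1 hw
    simp [weight, h0, hm]
  rw [tsum_congr hw, ENNReal.tsum_set_const, ← (motzkinExcursion_finite l m).cast_ncard_eq,
    Exc, Nat.card_coe_set_eq, mul_assoc]
  rfl

lemma tsum_weight_excursions :
    ∑' w : excursions, weight T U w =
      ∑' p : ℕ × ℕ, (Exc p.1 p.2 : ℝ≥0∞) * T ^ p.1 * U ^ p.2 := by
  have hfiber (p : ℕ × ℕ) :
      (fun w : List ℤ => (w.count 0, w.count (-1))) ⁻¹' {p} ∩ excursions =
        MotzkinExcursion p.1 p.2 := by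
    ext w
    simp [mem_motzkinExcursion, Prod.ext_iff, and_comm]
  rw [tsum_subtype, ← ENNReal.tsum_fiberwise _ fun w : List ℤ => (w.count 0, w.count (-1))]
  refine tsum_congr fun p => ?_
  rw [tsum_subtype, Set.indicator_indicator, hfiber, ← tsum_subtype,
    tsum_weight_motzkinExcursion]

end Weight

/-- The smaller root of `u x ^ 2 - (1 - t) x + 1`. -/
noncomputable def smallRoot (t u : ℝ) : ℝ := (1 - t - √((1 - t) ^ 2 - 4 * u)) / (2 * u)

section Root

variable {t u : ℝ}

lemma four_mul_lt_sq (hu : 0 < u) (h : t + 2 * √u < 1) : 4 * u < (1 - t) ^ 2 := by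
  nlinarith [Real.sq_sqrt hu.le, Real.sqrt_nonneg u]

lemma sq_sqrt_discr (hu : 0 < u) (h : t + 2 * √u < 1) :
    √((1 - t) ^ 2 - 4 * u) ^ 2 = (1 - t) ^ 2 - 4 * u :=
  Real.sq_sqrt (sub_nonneg.2 (four_mul_lt_sq hu h).le)

lemma sqrt_discr_pos (hu : 0 < u) (h : t + 2 * √u < 1) : 0 < √((1 - t) ^ 2 - 4 * u) :=
  Real.sqrt_pos.2 (sub_pos.2 (four_mul_lt_sq hu h))

lemma sqrt_discr_lt (hu : 0 < u) (h : t + 2 * √u < 1) : √((1 - t) ^ 2 - 4 * u) < 1 - t := by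
  nlinarith [sq_sqrt_discr hu h, sqrt_discr_pos hu h, Real.sqrt_nonneg u]

lemma two_mul_mul_smallRoot (hu : 0 < u) :
    2 * u * smallRoot t u = 1 - t - √((1 - t) ^ 2 - 4 * u) := by
  unfold smallRoot
  field_simp

lemma smallRoot_nonneg (hu : 0 < u) (h : t + 2 * √u < 1) : 0 ≤ smallRoot t u :=
  div_nonneg (by linarith [sqrt_discr_lt hu h]) (by positivity)

lemma one_add_mul_smallRoot_add_mul_sq (hu : 0 < u) (h : t + 2 * √u < 1) :
    1 + t * smallRoot t u + u * smallRoot t u ^ 2 = smallRoot t u := by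
  set r := smallRoot t u
  set s := √((1 - t) ^ 2 - 4 * u)
  have hs : s ^ 2 = (1 - t) ^ 2 - 4 * u := sq_sqrt_discr hu h
  have hr : 2 * u * r = 1 - t - s := two_mul_mul_smallRoot hu
  have h4 : 4 * u * (1 + t * r + u * r ^ 2 - r) = 0 := by
    linear_combination (2 * u * r - s - (1 - t)) * hr + hs
  have := (mul_eq_zero.1 h4).resolve_left (by positivity)
  linarith

lemma eq_smallRoot_of_le (hu : 0 < u) (h : t + 2 * √u < 1) {x : ℝ} (hx : x ≤ smallRoot t u)
    (hsub : 1 + t * x + u * x ^ 2 ≤ x) : x = smallRoot t u := by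
  have hr := one_add_mul_smallRoot_add_mul_sq hu h
  have h2 := two_mul_mul_smallRoot (t := t) hu
  have hs := sqrt_discr_pos hu h
  refine hx.antisymm (not_lt.1 fun hlt => ?_)
  -- `(x - r) (u (x + r) - (1 - t)) ≤ 0`, but both factors are negative
  nlinarith [mul_pos (sub_pos.2 hlt) hu]

theorem tsum_weight_excursions_eq_smallRoot (ht : 0 ≤ t) (hu : 0 < u) (h : t + 2 * √u < 1) :
    ∑' w : excursions, weight (ENNReal.ofReal t) (ENNReal.ofReal u) w =
      ENNReal.ofReal (smallRoot t u) := by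
  have hr := smallRoot_nonneg hu h
  have hle : ∑' w : excursions, weight (ENNReal.ofReal t) (ENNReal.ofReal u) w ≤
      ENNReal.ofReal (smallRoot t u) := tsum_weight_excursions_le <| by
    rw [← ENNReal.ofReal_one_add_mul_add_mul_sq ht hu.le hr,
      one_add_mul_smallRoot_add_mul_sq hu h]
  obtain ⟨x, hx, hF⟩ : ∃ x : ℝ, 0 ≤ x ∧
      ∑' w : excursions, weight (ENNReal.ofReal t) (ENNReal.ofReal u) w = ENNReal.ofReal x :=
    ⟨_, ENNReal.toReal_nonneg,
      (ENNReal.ofReal_toReal (ne_top_of_le_ne_top ENNReal.ofReal_ne_top hle)).symm⟩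
  have hsub := le_tsum_weight_excursions (T := ENNReal.ofReal t) (U := ENNReal.ofReal u)
  rw [hF, ← ENNReal.ofReal_one_add_mul_add_mul_sq ht hu.le hx,
    ENNReal.ofReal_le_ofReal_iff hx] at hsub
  rw [hF, ENNReal.ofReal_le_ofReal_iff hr] at hle
  rw [hF, eq_smallRoot_of_le hu h hle hsub]

end Root

end Motzkin

open Motzkin in
/-- For `t ≥ 0`, `u > 0` with `t + 2√u < 1`, the generating function of Motzkin
excursions converges with value `(1 − t − √((1−t)² − 4u)) / (2u)`. -/
theorem excursion_gf_value (t u : ℝ) (ht : 0 ≤ t) (hu : 0 < u)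
    (h : t + 2 * Real.sqrt u < 1) :
    Summable (fun p : ℕ × ℕ => (Exc p.1 p.2 : ℝ) * t ^ p.1 * u ^ p.2) ∧
      ∑' p : ℕ × ℕ, (Exc p.1 p.2 : ℝ) * t ^ p.1 * u ^ p.2 =
        (1 - t - Real.sqrt ((1 - t) ^ 2 - 4 * u)) / (2 * u) := by
  have hsum : HasSum (fun p : ℕ × ℕ => (Exc p.1 p.2 : ℝ) * t ^ p.1 * u ^ p.2)
      (smallRoot t u) := by
    refine hasSum_of_tsum_ofReal_eq (fun p => by positivity) (smallRoot_nonneg hu h) ?_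
    rw [← tsum_weight_excursions_eq_smallRoot ht hu h, tsum_weight_excursions]
    refine tsum_congr fun p => ?_
    rw [ENNReal.ofReal_mul (by positivity), ENNReal.ofReal_mul (by positivity),
      ENNReal.ofReal_natCast, ENNReal.ofReal_pow ht, ENNReal.ofReal_pow hu.le]
  exact ⟨hsum.summable, hsum.tsum_eq⟩
end

section
/- Let D be a finite nonempty set of even positive integers, let d̄ = gcd{i : 2i ∈ D}, and let R ∈ ℚ[[t, z]] be the unique formal power series with constant coefficient 0 satisfying R = t·z + z·Σ_{2i ∈ D} C(2i−1, i)·R^i. Then for all a, n ∈ ℕ, the coefficient of t^a·z^n in R vanishes unless n ≡ 1 (mod d̄). -/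
/-!
Grade monomials by their exponent of `z` modulo `d̄`. Multiplying by `z` shifts the grade by one,
and `R ^ i` lives in grade `i ≡ 0` as soon as `R` lives in grade `1`; since `t` has grade `0`, the
right-hand side `z · (t + Σ C(2i-1, i) R ^ i)` of the defining equation lives in grade `1` as well.
As the `z`-exponents on the right are raised by one, this is an induction on the `z`-exponent.
-/

open MvPowerSeries

namespace MvPowerSeries

variable {σ K : Type*} [CommSemiring K]

def SupportedOnResidueBelow (i : σ) (g r n : ℕ) (F : MvPowerSeries σ K) : Prop :=
  ∀ p : σ →₀ ℕ, p i < n → ¬ p i ≡ r [MOD g] → coeff p F = 0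

namespace SupportedOnResidueBelow

variable {i : σ} {g r s n : ℕ} {F G : MvPowerSeries σ K}

theorem of_modEq (hF : SupportedOnResidueBelow i g r n F) (h : r ≡ s [MOD g]) :
    SupportedOnResidueBelow i g s n F :=
  fun p hp hps => hF p hp fun hpr => hps (hpr.trans h)

theorem sum {ι : Type*} (D : Finset ι) {f : ι → MvPowerSeries σ K}
    (hf : ∀ d ∈ D, SupportedOnResidueBelow i g r n (f d)) :
    SupportedOnResidueBelow i g r n (∑ d ∈ D, f d) := fun p hp hpr => by
  rw [map_sum]
  exact Finset.sum_eq_zero fun d hd => hf d hd p hp hpr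

theorem add (hF : SupportedOnResidueBelow i g r n F) (hG : SupportedOnResidueBelow i g r n G) :
    SupportedOnResidueBelow i g r n (F + G) :=
  fun p hp hpr => by rw [map_add, hF p hp hpr, hG p hp hpr, add_zero]

theorem mul (hF : SupportedOnResidueBelow i g r n F) (hG : SupportedOnResidueBelow i g s n G) :
    SupportedOnResidueBelow i g (r + s) n (F * G) := by
  classical
  intro p hp hprs
  rw [coeff_mul]
  refine Finset.sum_eq_zero fun ⟨a, b⟩ hab => ?_
  rw [Finset.HasAntidiagonal.mem_antidiagonal] at hab
  have hpi : p i = a i + b i := by rw [← hab, Finsupp.add_apply]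
  by_cases har : a i ≡ r [MOD g]
  · have hbs : ¬ b i ≡ s [MOD g] := fun hbs => hprs (hpi ▸ har.add hbs)
    rw [hG b (by omega) hbs, mul_zero]
  · rw [hF a (by omega) har, zero_mul]

theorem pow (hF : SupportedOnResidueBelow i g r n F) (k : ℕ) :
    SupportedOnResidueBelow i g (k * r) n (F ^ k) := by
  induction k with
  | zero =>
    classical
    intro p _ hp
    rw [pow_zero, coeff_one, if_neg]
    rintro rfl
    exact hp (by simp [Nat.ModEq])
  | succ k ih => simpa [pow_succ, add_mul] using ih.mul hF

theorem C_mul (a : K) (hF : SupportedOnResidueBelow i g r n F) :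
    SupportedOnResidueBelow i g r n (C a * F) :=
  fun p hp hpr => by rw [coeff_C_mul, hF p hp hpr, mul_zero]

theorem natCast_mul (k : ℕ) (hF : SupportedOnResidueBelow i g r n F) :
    SupportedOnResidueBelow i g r n ((k : MvPowerSeries σ K) * F) := by
  simpa only [map_natCast] using hF.C_mul (k : K)

theorem X_of_ne {j : σ} (hji : j ≠ i) :
    SupportedOnResidueBelow i g 0 n (X j : MvPowerSeries σ K) := by
  classical
  intro p _ hp
  rw [coeff_X, if_neg]
  rintro rfl
  exact hp (by simp [hji, Nat.ModEq])

theorem X_mul (hG : SupportedOnResidueBelow i g r n G) :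
    SupportedOnResidueBelow i g (r + 1) (n + 1) (X i * G) := by
  classical
  intro p hp hpr
  rw [X_def, coeff_monomial_mul, one_mul]
  split_ifs with hip
  · have hi : 1 ≤ p i := by simpa using hip i
    refine hG _ (by simp; omega) fun h => hpr ?_
    simpa [Nat.sub_add_cancel hi] using h.add_right 1
  · rfl

end SupportedOnResidueBelow

theorem supportedOnResidueBelow_of_eq_X_mul_X_add {ι : Type*} (D : Finset ι) (c e : ι → ℕ)
    {i j : σ} (hji : j ≠ i) {R : MvPowerSeries σ K}
    (hR : R = X j * X i + X i * ∑ d ∈ D, (c d : MvPowerSeries σ K) * R ^ e d) (n : ℕ) :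
    SupportedOnResidueBelow i (D.gcd e) 1 n R := by
  induction n with
  | zero => exact fun p hp => absurd hp (Nat.not_lt_zero _)
  | succ n ih =>
    have hsum : SupportedOnResidueBelow i (D.gcd e) 0 n
        (∑ d ∈ D, (c d : MvPowerSeries σ K) * R ^ e d) :=
      .sum D fun d hd => ((ih.pow (e d)).natCast_mul (c d)).of_modEq <| by
        simpa [Nat.modEq_zero_iff_dvd] using Finset.gcd_dvd hd
    rw [hR, ← mul_comm (X i), ← mul_add]
    simpa using ((SupportedOnResidueBelow.X_of_ne hji).add hsum).X_mul

end MvPowerSeries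

theorem coeff_vanishes_unless_congruent_general (D : Finset ℕ)
    (R : MvPowerSeries (Fin 2) ℚ)
    (hR : R = X 0 * X 1 +
        X 1 * ∑ d ∈ D, (Nat.choose (d - 1) (d / 2) : MvPowerSeries (Fin 2) ℚ) *
          R ^ (d / 2)) :
    ∀ a n : ℕ, ¬ n ≡ 1 [MOD D.gcd (fun d => d / 2)] →
      coeff (Finsupp.single (0 : Fin 2) a + Finsupp.single (1 : Fin 2) n) R = 0 := by
  intro a n hn
  exact supportedOnResidueBelow_of_eq_X_mul_X_add D (fun d => Nat.choose (d - 1) (d / 2))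
    (· / 2) (by decide) hR (n + 1) _ (by simp) (by simpa using hn)

/-- Let `D` be a finite nonempty set of even positive integers,
`d̄ = gcd{i : 2i ∈ D}`, and `R ∈ ℚ[[t, z]]` the power series with constant coefficient
`0` satisfying `R = t·z + z·Σ_{2i ∈ D} C(2i−1, i)·R^i` (with `t = X 0`, `z = X 1`).
Then the coefficient of `t^a·z^n` in `R` vanishes unless `n ≡ 1 (mod d̄)`. -/
theorem coeff_vanishes_unless_congruent (D : Finset ℕ)
    (hne : D.Nonempty) (hD : ∀ d ∈ D, Even d ∧ 0 < d)
    (R : MvPowerSeries (Fin 2) ℚ)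
    (hR0 : constantCoeff R = 0)
    (hR : R = X 0 * X 1 +
        X 1 * ∑ d ∈ D, (Nat.choose (d - 1) (d / 2) : MvPowerSeries (Fin 2) ℚ) *
          R ^ (d / 2)) :
    ∀ a n : ℕ, ¬ n ≡ 1 [MOD D.gcd (fun d => d / 2)] →
      coeff (Finsupp.single (0 : Fin 2) a + Finsupp.single (1 : Fin 2) n) R = 0 :=
  coeff_vanishes_unless_congruent_general D R hR
end

section
/- Let t, u be real numbers with t > 0 and u > 0, and for i ∈ ℕ set a_i = Σ_{m : 2m ≤ i} i!/((i−2m)!·m!·m!)·t^{i−2m}·u^m. Then there exists a constant c > 0 such that a_i ~ c·i^{−1/2}·(t + 2√u)^i as i → ∞; that is, the sequence a_i·√i/(t + 2√u)^i converges to c. -/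
/-!
Reading off the constant term of `(t + √u (z + z⁻¹))^i` on the unit circle gives
`a_i = (2π)⁻¹ ∫_{-π}^{π} (t + 2√u cos θ)^i dθ`. After dividing by `(t + 2√u)^i` the integrand is
`g(θ)^i` with `g(θ) = (t + 2√u cos θ)/(t + 2√u)`, which satisfies `|g θ| ≤ exp(-c θ²)` on
`[-π, π]` and `g θ = 1 - κ θ² + O(θ⁴)` with `κ = √u/(t + 2√u)`. Laplace's method (substitute
`θ = x/√i` and dominate by a Gaussian) gives `√i ∫ g^i → √(π/κ)`, so `c = (2π)⁻¹ √(π/κ)`.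
-/

open Filter Real Topology MeasureTheory Set

theorem integral_neg_pi_pi_cos_pow_add_two (n : ℕ) :
    ∫ θ in -π..π, cos θ ^ (n + 2) = (n + 1) / (n + 2) * ∫ θ in -π..π, cos θ ^ n := by
  simp [integral_cos_pow]

theorem integral_neg_pi_pi_cos_pow_odd (m : ℕ) :
    ∫ θ in -π..π, cos θ ^ (2 * m + 1) = 0 := by
  induction m with
  | zero => simp
  | succ m ih => rw [show 2 * (m + 1) + 1 = 2 * m + 1 + 2 by ring,
      integral_neg_pi_pi_cos_pow_add_two, ih, mul_zero]

theorem integral_neg_pi_pi_cos_pow_even (m : ℕ) :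
    ∫ θ in -π..π, cos θ ^ (2 * m) = 2 * π * m.centralBinom / 4 ^ m := by
  induction m with
  | zero => simp [two_mul]
  | succ m ih =>
    have hrec : ((m : ℝ) + 1) * (m + 1).centralBinom = 2 * (2 * m + 1) * m.centralBinom := by
      exact_mod_cast Nat.succ_mul_centralBinom_succ m
    rw [show 2 * (m + 1) = 2 * m + 2 by ring, integral_neg_pi_pi_cos_pow_add_two, ih, pow_succ]
    push_cast
    field_simp
    linear_combination (-2) * hrec

theorem sum_range_succ_eq_sum_two_mul_of_odd_eq_zero {M : Type*} [AddCommMonoid M] {f : ℕ → M}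
    (hf : ∀ m, f (2 * m + 1) = 0) (n : ℕ) :
    ∑ k ∈ Finset.range (n + 1), f k = ∑ m ∈ Finset.range (n / 2 + 1), f (2 * m) := by
  rw [← Finset.sum_image (g := (2 * ·)) (by intro a _ b _ h; simpa using h)]
  refine (Finset.sum_subset ?_ ?_).symm
  · intro k hk
    simp only [Finset.mem_image, Finset.mem_range] at hk ⊢
    omega
  · intro k hk' hk
    obtain ⟨m, rfl | rfl⟩ := Nat.even_or_odd' k
    · simp only [Finset.mem_range] at hk'
      exact absurd (Finset.mem_image_of_mem _ (Finset.mem_range.2 (by omega))) hk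
    · exact hf m

open Nat in
theorem factorial_div_eq_choose_mul_centralBinom {i m : ℕ} (h : 2 * m ≤ i) :
    (i ! : ℝ) / ((i - 2 * m)! * m ! * m !) = i.choose (2 * m) * m.centralBinom := by
  have h1 : (i.choose (2 * m) * (2 * m)! * (i - 2 * m)! : ℝ) = i ! := by
    exact_mod_cast Nat.choose_mul_factorial_mul_factorial h
  have h2 : (m.centralBinom * m ! * m ! : ℝ) = (2 * m)! := by
    have := Nat.choose_mul_factorial_mul_factorial (n := 2 * m) (k := m) (by omega)
    rw [show 2 * m - m = m by omega, ← Nat.centralBinom_eq_two_mul_choose] at this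
    exact_mod_cast this
  rw [div_eq_iff (by positivity), ← h1, ← h2]
  ring

open Nat in
theorem sum_trinomial_eq_integral (t v : ℝ) (i : ℕ) :
    ∑ m ∈ Finset.range (i / 2 + 1),
        (i ! : ℝ) / ((i - 2 * m)! * m ! * m !) * t ^ (i - 2 * m) * (v ^ 2) ^ m =
      (2 * π)⁻¹ * ∫ θ in -π..π, (t + 2 * v * cos θ) ^ i := by
  have hexpand : ∀ θ, (t + 2 * v * cos θ) ^ i =
      ∑ k ∈ Finset.range (i + 1), (2 * v) ^ k * t ^ (i - k) * i.choose k * cos θ ^ k := by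
    intro θ
    rw [add_comm, add_pow]
    exact Finset.sum_congr rfl fun k _ => by ring
  symm
  rw [intervalIntegral.integral_congr fun θ _ => hexpand θ, intervalIntegral.integral_finsetSum
    fun k _ => by apply Continuous.intervalIntegrable; fun_prop]
  simp only [intervalIntegral.integral_const_mul]
  rw [sum_range_succ_eq_sum_two_mul_of_odd_eq_zero (by simp [integral_neg_pi_pi_cos_pow_odd]),
    Finset.mul_sum]
  refine Finset.sum_congr rfl fun m hm => ?_
  rw [factorial_div_eq_choose_mul_centralBinom (by simp at hm; omega),
    integral_neg_pi_pi_cos_pow_even, pow_mul, mul_pow, mul_pow]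
  field_simp
  ring

theorem tendsto_nat_mul_cos_div_sqrt_sub_one (x : ℝ) :
    Tendsto (fun n : ℕ => n * (cos (x / √n) - 1)) atTop (𝓝 (-(x ^ 2 / 2))) := by
  rw [← tendsto_sub_nhds_zero_iff]
  refine squeeze_zero_norm' ?_ (tendsto_const_div_atTop_nhds_zero_nat (x ^ 4 * (5 / 96)))
  filter_upwards [eventually_ge_atTop (⌈x ^ 2⌉₊ + 1)] with n hn
  have hn0 : (0 : ℝ) < n := by exact_mod_cast (by omega : 0 < n)
  have hxn : x ^ 2 ≤ n := (Nat.le_ceil _).trans (by exact_mod_cast (by omega : ⌈x ^ 2⌉₊ ≤ n))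
  have hsq : (x / √n) ^ 2 = x ^ 2 / n := by rw [div_pow, sq_sqrt hn0.le]
  have hsmall : |x / √n| ≤ 1 := by
    rw [← sq_le_one_iff_abs_le_one, hsq, div_le_one hn0]; exact hxn
  have hcos := cos_bound hsmall
  have h4 : |x / √n| ^ 4 = (x ^ 2 / n) ^ 2 := by
    rw [(by decide : Even 4).pow_abs, ← hsq]; ring
  rw [h4] at hcos
  have hdiff : n * (cos (x / √n) - 1) - -(x ^ 2 / 2) =
      n * (cos (x / √n) - (1 - (x / √n) ^ 2 / 2)) := by
    rw [hsq]; field_simp; ring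
  rw [Real.norm_eq_abs, hdiff, abs_mul, abs_of_pos hn0]
  calc (n : ℝ) * |cos (x / √n) - (1 - (x / √n) ^ 2 / 2)| ≤ n * ((x ^ 2 / n) ^ 2 * (5 / 96)) := by
        gcongr
    _ = x ^ 4 * (5 / 96) / n := by field_simp

theorem abs_add_mul_cos_le {t v θ : ℝ} (ht : 0 < t) (hv : 0 < v) (hθ : |θ| ≤ π) :
    |t + 2 * v * cos θ| ≤ t + 2 * v - 2 * min t (2 * v) / π ^ 2 * θ ^ 2 := by
  have hθ2 : θ ^ 2 ≤ π ^ 2 := by rw [← sq_abs]; gcongr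
  have hmin : 2 * min t (2 * v) / π ^ 2 * θ ^ 2 ≤ 2 * min t (2 * v) := by
    rw [div_mul_eq_mul_div, div_le_iff₀ (by positivity)]
    gcongr
  have hright : 2 * min t (2 * v) / π ^ 2 * θ ^ 2 ≤ 2 * v * (2 / π ^ 2 * θ ^ 2) := by
    calc _ = min t (2 * v) * (2 / π ^ 2 * θ ^ 2) := by ring
      _ ≤ 2 * v * (2 / π ^ 2 * θ ^ 2) := by gcongr; exact min_le_right _ _
  have hcos := mul_le_mul_of_nonneg_left (cos_le_one_sub_mul_cos_sq hθ) (by positivity : 0 ≤ 2 * v)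
  rw [abs_le]
  constructor
  · nlinarith [neg_one_le_cos θ, min_le_left t (2 * v)]
  · linarith

theorem exists_abs_add_mul_cos_div_le_exp {t v : ℝ} (ht : 0 < t) (hv : 0 < v) :
    ∃ c > 0, ∀ θ, |θ| ≤ π → |(t + 2 * v * cos θ) / (t + 2 * v)| ≤ exp (-(c * θ ^ 2)) := by
  refine ⟨2 * min t (2 * v) / π ^ 2 / (t + 2 * v), by positivity, fun θ hθ => ?_⟩
  have hpos : 0 < t + 2 * v := by positivity
  calc |(t + 2 * v * cos θ) / (t + 2 * v)|
      ≤ 1 + -(2 * min t (2 * v) / π ^ 2 / (t + 2 * v) * θ ^ 2) := by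
        rw [abs_div, abs_of_pos hpos, div_le_iff₀ hpos]
        refine (abs_add_mul_cos_le ht hv hθ).trans_eq ?_
        field_simp
        ring
    _ ≤ _ := by rw [add_comm]; exact add_one_le_exp _

theorem mul_intervalIntegral_eq_integral_indicator_comp_div (f : ℝ → ℝ) {a s : ℝ}
    (ha : 0 ≤ a) (hs : 0 < s) :
    s * ∫ θ in -a..a, f θ = ∫ x, (Ioc (-(a * s)) (a * s)).indicator (fun x => f (x / s)) x := by
  rw [integral_indicator measurableSet_Ioc, ← intervalIntegral.integral_of_le (by nlinarith),
    intervalIntegral.integral_comp_div f hs.ne', smul_eq_mul, neg_div, mul_div_cancel_right₀ _ hs.ne']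

theorem tendsto_sqrt_mul_integral_pow {g : ℝ → ℝ} {a c κ : ℝ} (hg : Continuous g) (ha : 0 < a)
    (hc : 0 < c) (hbound : ∀ θ, |θ| ≤ a → |g θ| ≤ exp (-(c * θ ^ 2)))
    (hlim : ∀ x, Tendsto (fun n : ℕ => n * (g (x / √n) - 1)) atTop (𝓝 (-(κ * x ^ 2)))) :
    Tendsto (fun n : ℕ => √n * ∫ θ in -a..a, g θ ^ n) atTop (𝓝 √(π / κ)) := by
  have hsqrt : Tendsto (fun n : ℕ => √n) atTop atTop :=
    tendsto_sqrt_atTop.comp tendsto_natCast_atTop_atTop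
  have hsqrt_pos : ∀ᶠ n : ℕ in atTop, 0 < √n :=
    (eventually_ge_atTop 1).mono fun n hn => sqrt_pos.2 (by exact_mod_cast hn)
  rw [← integral_gaussian]
  refine Tendsto.congr' ?_ (tendsto_integral_filter_of_dominated_convergence
    (F := fun n : ℕ => (Ioc (-(a * √n)) (a * √n)).indicator (fun x => g (x / √n) ^ n))
    (fun x => exp (-c * x ^ 2)) ?_ ?_ (integrable_exp_neg_mul_sq hc) ?_)
  · filter_upwards [hsqrt_pos] with n hn
    rw [mul_intervalIntegral_eq_integral_indicator_comp_div _ ha.le hn]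
  · exact Eventually.of_forall fun n =>
      (Continuous.aestronglyMeasurable (by fun_prop)).indicator measurableSet_Ioc
  · filter_upwards [hsqrt_pos] with n hn
    refine Eventually.of_forall fun x => ?_
    by_cases hx : x ∈ Ioc (-(a * √n)) (a * √n)
    · have hθ : |x / √n| ≤ a := by
        rw [abs_div, abs_of_pos hn, div_le_iff₀ hn, abs_le]
        exact ⟨by linarith [hx.1], hx.2⟩
      have hsq : (n : ℝ) * (x / √n) ^ 2 = x ^ 2 := by
        rw [div_pow, sq_sqrt (Nat.cast_nonneg n)]
        field_simp [(sqrt_pos.1 hn).ne']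
      rw [indicator_of_mem hx, norm_pow, Real.norm_eq_abs]
      calc |g (x / √n)| ^ n ≤ exp (-(c * (x / √n) ^ 2)) ^ n := by gcongr; exact hbound _ hθ
        _ = exp (-c * x ^ 2) := by rw [← exp_nat_mul, ← hsq]; ring_nf
    · simp [indicator_of_notMem hx, (exp_pos _).le]
  · refine Eventually.of_forall fun x => ?_
    have hmem : ∀ᶠ n : ℕ in atTop, x ∈ Ioc (-(a * √n)) (a * √n) := by
      filter_upwards [(hsqrt.const_mul_atTop ha).eventually_gt_atTop |x|] with n hn
      exact ⟨by linarith [neg_abs_le x], (le_abs_self x).trans hn.le⟩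
    have hpow := tendsto_one_add_pow_exp_of_tendsto (hlim x)
    rw [neg_mul]
    refine hpow.congr' ?_
    filter_upwards [hmem] with n hn
    rw [indicator_of_mem hn, add_sub_cancel]

/-- For `t, u > 0`, the coefficients
`a_i = Σ_{2m ≤ i} B_{i−2m,m}·t^{i−2m}·u^m` of `1/√(1 − 2ts + t²s² − 4us²)` satisfy
`a_i ~ c·i^{−1/2}·(t + 2√u)^i` for some `c > 0`. -/
theorem bridge_diagonal_asymptotics (t u : ℝ) (ht : 0 < t) (hu : 0 < u) :
    ∃ c : ℝ, 0 < c ∧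
      Tendsto
        (fun i : ℕ =>
          (∑ m ∈ Finset.range (i / 2 + 1),
              (Nat.factorial i : ℝ) /
                  ((Nat.factorial (i - 2 * m) : ℝ) * (Nat.factorial m : ℝ) *
                    (Nat.factorial m : ℝ)) *
                t ^ (i - 2 * m) * u ^ m) *
            Real.sqrt i / (t + 2 * Real.sqrt u) ^ i)
        atTop (nhds c) := by
  set v := √u
  have hv : 0 < v := sqrt_pos.2 hu
  set κ := v / (t + 2 * v)
  obtain ⟨c, hc, hbound⟩ := exists_abs_add_mul_cos_div_le_exp ht hv
  have hlim (x : ℝ) : Tendsto (fun n : ℕ => n * ((t + 2 * v * cos (x / √n)) / (t + 2 * v) - 1))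
      atTop (𝓝 (-(κ * x ^ 2))) := by
    convert (tendsto_nat_mul_cos_div_sqrt_sub_one x).const_mul (2 * v / (t + 2 * v)) using 2
    · field_simp; ring
    · ring
  refine ⟨(2 * π)⁻¹ * √(π / κ), by positivity, ?_⟩
  convert (tendsto_sqrt_mul_integral_pow (by fun_prop) pi_pos hc hbound hlim).const_mul (2 * π)⁻¹
    using 2 with i
  rw [show u = v ^ 2 from (sq_sqrt hu.le).symm, sum_trinomial_eq_integral]
  simp only [div_pow, intervalIntegral.integral_div]
  ring
end

section
/- Let t, u be real numbers with t > 0 and u > 0, and for i ∈ ℕ set b_i = Σ_{m : 2m ≤ i} m·i!/((i−2m)!·m!·m!)·t^{i−2m}·u^m. Then there exists a constant c' > 0 such that b_i ~ c'·i^{1/2}·(t + 2√u)^i as i → ∞; that is, the sequence b_i/(√i·(t + 2√u)^i) converges to c'. -/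
/-!
Expanding the power binomially and using `∫₀^π cos^(2m) = π·C(2m,m)/4^m` (odd powers integrate
to zero) gives `b_i = (i √u / π) ∫₀^π cos θ (t + 2√u cos θ)^(i-1) dθ`.
With `ρ = t + 2√u` and `a = √u / ρ` the integrand is `ρ^(i-1) cos θ (1 - 2a(1 - cos θ))^(i-1)`;
`t > 0` means `a < 1/2`, so `|1 - 2a(1 - cos θ)| ≤ exp(-cθ²)` on `[0, π]`. Laplace's method at
`θ = 0`, where `1 - 2a(1 - cos θ) ≈ 1 - aθ²`, gives `√n ∫₀^π cos θ (1 - 2a(1 - cos θ))^n → √(π/a)/2`,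
hence `b_i / (√i ρ^i) → (a/π) √(π/a)/2`.
-/

open Filter Real

section Trinomial

open Finset Nat intervalIntegral

theorem integral_cos_pow_odd (n : ℕ) : ∫ θ in 0..π, cos θ ^ (2 * n + 1) = 0 := by
  simpa using integral_sin_pow_mul_cos_pow_odd (a := 0) (b := π) 0 n

theorem integral_cos_pow_even (n : ℕ) :
    ∫ θ in 0..π, cos θ ^ (2 * n) = π * n.centralBinom / 4 ^ n := by
  induction n with
  | zero => simp
  | succ n ih =>
    have hrec : ((n : ℝ) + 1) * (n + 1).centralBinom = 2 * (2 * n + 1) * n.centralBinom := by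
      exact_mod_cast succ_mul_centralBinom_succ n
    rw [mul_add_one, integral_cos_pow, ih]
    simp only [sin_pi, sin_zero, mul_zero, sub_zero, zero_div, zero_add]
    field_simp
    push_cast
    linear_combination (-2 * 4 ^ n : ℝ) * hrec

theorem sum_range_eq_sum_odd_of_even_eq_zero {M : Type*} [AddCommMonoid M] {f : ℕ → M}
    (hf : ∀ k, Even k → f k = 0) (n : ℕ) :
    ∑ k ∈ range n, f k = ∑ j ∈ range (n / 2), f (2 * j + 1) := by
  induction n with
  | zero => simp
  | succ n ih =>
    rw [sum_range_succ, ih]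
    rcases Nat.even_or_odd' n with ⟨j, rfl | rfl⟩
    · rw [hf _ (even_two_mul j), add_zero, show (2 * j + 1) / 2 = 2 * j / 2 by omega]
    · rw [show (2 * j + 1 + 1) / 2 = (2 * j + 1) / 2 + 1 by omega, sum_range_succ,
        show (2 * j + 1) / 2 = j by omega]

theorem choose_two_mul_mul_centralBinom {i m : ℕ} (h : 2 * m ≤ i) :
    (i.choose (2 * m) * m.centralBinom : ℝ) = i ! / ((i - 2 * m)! * m ! * m !) := by
  rw [centralBinom_eq_two_mul_choose, cast_choose ℝ h,
    cast_choose ℝ (by omega : m ≤ 2 * m), show 2 * m - m = m by omega]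
  field_simp

theorem integral_cos_mul_add_mul_cos_pow (t s : ℝ) (n : ℕ) :
    ∫ θ in 0..π, cos θ * (t + s * cos θ) ^ n =
      ∑ k ∈ range (n + 1), n.choose k * t ^ (n - k) * s ^ k * ∫ θ in 0..π, cos θ ^ (k + 1) := by
  have hexpand : ∀ θ, cos θ * (t + s * cos θ) ^ n =
      ∑ k ∈ range (n + 1), n.choose k * t ^ (n - k) * s ^ k * cos θ ^ (k + 1) := by
    intro θ
    rw [add_comm, add_pow, mul_sum]
    refine sum_congr rfl fun k _ => ?_
    ring
  simp_rw [hexpand]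
  rw [integral_finsetSum fun k _ => by apply Continuous.intervalIntegrable; fun_prop]
  simp_rw [integral_const_mul]

noncomputable def weightedTrinomialSum (t u : ℝ) (i : ℕ) : ℝ :=
  ∑ m ∈ range (i / 2 + 1),
    (m : ℝ) * (i ! : ℝ) / ((i - 2 * m)! * m ! * m !) * t ^ (i - 2 * m) * u ^ m

theorem weightedTrinomialSum_succ_eq_integral (t : ℝ) {u : ℝ} (hu : 0 ≤ u) (n : ℕ) :
    weightedTrinomialSum t u (n + 1) =
      (n + 1) * √u / π * ∫ θ in 0..π, cos θ * (t + 2 * √u * cos θ) ^ n := by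
  obtain ⟨s, hs, rfl⟩ : ∃ s, 0 ≤ s ∧ u = s ^ 2 := ⟨√u, sqrt_nonneg u, (sq_sqrt hu).symm⟩
  rw [sqrt_sq hs, integral_cos_mul_add_mul_cos_pow, sum_range_eq_sum_odd_of_even_eq_zero, mul_sum,
    weightedTrinomialSum, sum_range_succ']
  · simp only [CharP.cast_eq_zero, zero_mul, zero_div, add_zero]
    refine sum_congr rfl fun j hj => ?_
    have hj : 2 * (j + 1) ≤ n + 1 := by rw [mem_range] at hj; omega
    have hchoose : ((n : ℝ) + 1) * n.choose (2 * j + 1) =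
        (n + 1).choose (2 * (j + 1)) * (2 * (j + 1)) := by
      exact_mod_cast add_one_mul_choose_eq n (2 * j + 1)
    rw [mul_div_assoc, ← choose_two_mul_mul_centralBinom hj,
      show 2 * j + 1 + 1 = 2 * (j + 1) by ring, integral_cos_pow_even,
      show n - (2 * j + 1) = n + 1 - 2 * (j + 1) by omega,
      show (4 : ℝ) ^ (j + 1) = 2 ^ (2 * (j + 1)) by rw [pow_mul]; norm_num]
    field_simp
    push_cast
    linear_combination
      (-((j + 1).centralBinom * t ^ (n + 1 - 2 * (j + 1)) * s * (s * 2) ^ (2 * j + 1)) : ℝ) *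
        hchoose
  · rintro k ⟨j, rfl⟩
    rw [← two_mul, integral_cos_pow_odd, mul_zero]

theorem integral_cos_mul_add_two_mul_cos_pow_eq {t s ρ a : ℝ} (hρ : t + 2 * s = ρ)
    (ha : a * ρ = s) (n : ℕ) :
    ∫ θ in 0..π, cos θ * (t + 2 * s * cos θ) ^ n =
      ρ ^ n * ∫ θ in 0..π, cos θ * (1 - 2 * a * (1 - cos θ)) ^ n := by
  rw [← intervalIntegral.integral_const_mul]
  congr with θ
  rw [show t + 2 * s * cos θ = ρ * (1 - 2 * a * (1 - cos θ)) by
    linear_combination hρ + 2 * (1 - cos θ) * ha, mul_pow]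
  ring

end Trinomial

section Laplace

open Topology MeasureTheory Set

theorem tendsto_sqrt_natCast_atTop : Tendsto (fun n : ℕ => √(n : ℝ)) atTop atTop :=
  tendsto_sqrt_atTop.comp tendsto_natCast_atTop_atTop

theorem tendsto_div_sqrt_natCast (s : ℝ) : Tendsto (fun n : ℕ => s / √n) atTop (𝓝 0) :=
  tendsto_const_nhds.div_atTop tendsto_sqrt_natCast_atTop

theorem Filter.Tendsto.sqrt_add_one_mul {x : ℕ → ℝ} {L : ℝ}
    (h : Tendsto (fun n : ℕ => √n * x n) atTop (𝓝 L)) :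
    Tendsto (fun n : ℕ => √(n + 1) * x n) atTop (𝓝 L) := by
  have hratio : Tendsto (fun n : ℕ => √(n + 1) / √n) atTop (𝓝 1) := by
    have := ((tendsto_const_div_atTop_nhds_zero_nat 1).const_add 1).sqrt
    rw [add_zero, sqrt_one] at this
    refine this.congr' ?_
    filter_upwards [eventually_ne_atTop 0] with n hn
    rw [← sqrt_div (by positivity), one_add_div (Nat.cast_ne_zero.2 hn)]
  have hprod := hratio.mul h
  rw [one_mul] at hprod
  refine hprod.congr' ?_
  filter_upwards [eventually_ne_atTop 0] with n hn
  have : √(n : ℝ) ≠ 0 := by positivity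
  field_simp

theorem mul_intervalIntegral_eq_integral_indicator (f : ℝ → ℝ) {b c : ℝ} (hb : 0 ≤ b)
    (hc : 0 < c) :
    c * ∫ θ in 0..b, f θ = ∫ s, (Ioc 0 (b * c)).indicator (fun s => f (s / c)) s := by
  rw [integral_indicator measurableSet_Ioc, ← intervalIntegral.integral_of_le (by positivity),
    intervalIntegral.integral_comp_div f hc.ne', zero_div, mul_div_cancel_right₀ _ hc.ne',
    smul_eq_mul]

theorem tendsto_one_sub_sq_mul_pow {h : ℝ → ℝ} (hh : ContinuousAt h 0) (s : ℝ) :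
    Tendsto (fun n : ℕ => (1 - (s / √n) ^ 2 * h (s / √n)) ^ n) atTop
      (𝓝 (exp (-h 0 * s ^ 2))) := by
  have hlin : Tendsto (fun n : ℕ => n * -((s / √n) ^ 2 * h (s / √n))) atTop
      (𝓝 (-h 0 * s ^ 2)) := by
    have hlim := (hh.tendsto.comp (tendsto_div_sqrt_natCast s)).const_mul (-s ^ 2)
    rw [show -s ^ 2 * h 0 = -h 0 * s ^ 2 by ring] at hlim
    refine hlim.congr' ?_
    filter_upwards [eventually_ne_atTop 0] with n hn
    rw [Function.comp_apply, div_pow, sq_sqrt n.cast_nonneg]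
    field_simp
  simpa [sub_eq_add_neg] using tendsto_one_add_pow_exp_of_tendsto hlin

theorem norm_mul_pow_div_sqrt_le {φ g : ℝ → ℝ} {b c M : ℝ}
    (hφ : ∀ θ ∈ Icc 0 b, ‖φ θ‖ ≤ M) (hg : ∀ θ ∈ Icc 0 b, |g θ| ≤ exp (-(c * θ ^ 2)))
    {n : ℕ} (hn : 0 < n) {s : ℝ} (hs : s ∈ Ioc 0 (b * √n)) :
    ‖φ (s / √n) * g (s / √n) ^ n‖ ≤ M * exp (-c * s ^ 2) := by
  have hsqrt : 0 < √(n : ℝ) := sqrt_pos.2 (Nat.cast_pos.2 hn)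
  have hθ : s / √n ∈ Icc 0 b := ⟨div_nonneg hs.1.le hsqrt.le, (div_le_iff₀ hsqrt).2 hs.2⟩
  calc ‖φ (s / √n) * g (s / √n) ^ n‖ = ‖φ (s / √n)‖ * |g (s / √n)| ^ n := by
        rw [norm_mul, norm_pow, norm_eq_abs (g _)]
    _ ≤ M * exp (-(c * (s / √n) ^ 2)) ^ n := by
        gcongr
        · exact (norm_nonneg _).trans (hφ _ hθ)
        · exact hφ _ hθ
        · exact hg _ hθ
    _ = M * exp (-c * s ^ 2) := by
        rw [← exp_nat_mul, div_pow, sq_sqrt n.cast_nonneg]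
        field_simp

theorem tendsto_sqrt_mul_integral_mul_pow {φ h : ℝ → ℝ} {b c : ℝ} (hb : 0 < b) (hc : 0 < c)
    (hφ : Continuous φ) (hh : Continuous h)
    (hbound : ∀ θ ∈ Icc 0 b, |1 - θ ^ 2 * h θ| ≤ exp (-(c * θ ^ 2))) :
    Tendsto (fun n : ℕ => √n * ∫ θ in 0..b, φ θ * (1 - θ ^ 2 * h θ) ^ n) atTop
      (𝓝 (φ 0 * (√(π / h 0) / 2))) := by
  obtain ⟨M, hM⟩ := (isCompact_Icc (a := 0) (b := b)).exists_bound_of_continuousOn hφ.continuousOn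
  have hM₀ : 0 ≤ M := (norm_nonneg _).trans (hM 0 ⟨le_rfl, hb.le⟩)
  set g : ℝ → ℝ := fun θ => 1 - θ ^ 2 * h θ
  set F : ℕ → ℝ → ℝ := fun n => (Ioc 0 (b * √n)).indicator fun s => φ (s / √n) * g (s / √n) ^ n
  have hrescale : ∀ᶠ n : ℕ in atTop, ∫ s, F n s = √n * ∫ θ in 0..b, φ θ * g θ ^ n := by
    filter_upwards [eventually_gt_atTop 0] with n hn
    exact (mul_intervalIntegral_eq_integral_indicator (fun θ => φ θ * g θ ^ n) hb.le
      (sqrt_pos.2 (Nat.cast_pos.2 hn))).symm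
  have hgauss : ∫ s, (Ioi 0).indicator (fun s => φ 0 * exp (-h 0 * s ^ 2)) s =
      φ 0 * (√(π / h 0) / 2) := by
    rw [integral_indicator measurableSet_Ioi, integral_const_mul, integral_gaussian_Ioi]
  rw [← hgauss]
  refine (tendsto_integral_filter_of_dominated_convergence (fun s => M * exp (-c * s ^ 2))
    ?_ ?_ ((integrable_exp_neg_mul_sq hc).const_mul M) ?_).congr' hrescale
  · refine Eventually.of_forall fun n => ?_
    have : Continuous fun s => φ (s / √n) * g (s / √n) ^ n := by fun_prop
    exact this.aestronglyMeasurable.indicator measurableSet_Ioc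
  · filter_upwards [eventually_gt_atTop 0] with n hn
    refine Eventually.of_forall fun s => ?_
    by_cases hs : s ∈ Ioc 0 (b * √n)
    · simpa only [F, indicator_of_mem hs] using norm_mul_pow_div_sqrt_le hM hbound hn hs
    · simp only [F, indicator_of_notMem hs, norm_zero]
      positivity
  · refine Eventually.of_forall fun s => ?_
    rcases le_or_gt s 0 with hs | hs
    · simp [F, hs]
    have hmem : ∀ᶠ n : ℕ in atTop, s ∈ Ioc 0 (b * √n) := by
      filter_upwards [(tendsto_sqrt_natCast_atTop.const_mul_atTop hb).eventually_ge_atTop s]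
        with n hn using ⟨hs, hn⟩
    rw [indicator_of_mem (mem_Ioi.2 hs)]
    refine (((hφ.tendsto 0).comp (tendsto_div_sqrt_natCast s)).mul
      (tendsto_one_sub_sq_mul_pow hh.continuousAt s)).congr' ?_
    filter_upwards [hmem] with n hn
    simp [F, indicator_of_mem hn, g]

theorem one_sub_two_mul_one_sub_cos_eq (a θ : ℝ) :
    1 - 2 * a * (1 - cos θ) = 1 - θ ^ 2 * (a * sinc (θ / 2) ^ 2) := by
  rcases eq_or_ne θ 0 with rfl | hθ
  · simp
  have hcos : cos θ = 1 - 2 * sin (θ / 2) ^ 2 := by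
    rw [sin_sq_eq_half_sub, mul_div_cancel₀ _ two_ne_zero]
    ring
  rw [sinc_of_ne_zero (div_ne_zero hθ two_ne_zero), hcos]
  field_simp
  ring

theorem abs_one_sub_two_mul_one_sub_cos_le {a θ : ℝ} (ha : 0 < a) (ha' : a < 1 / 2)
    (hθ : |θ| ≤ π) :
    |1 - 2 * a * (1 - cos θ)| ≤ exp (-(min (4 * a) (2 - 4 * a) / π ^ 2 * θ ^ 2)) := by
  set m := min (4 * a) (2 - 4 * a)
  have hm₁ : m ≤ 4 * a := min_le_left _ _
  have hm₂ : m ≤ 2 - 4 * a := min_le_right _ _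
  have hm₀ : 0 ≤ m := le_min (by linarith) (by linarith)
  set x := θ ^ 2 / π ^ 2
  have hx₀ : 0 ≤ x := by positivity
  have hx₁ : x ≤ 1 :=
    div_le_one_of_le₀ (sq_le_sq' (abs_le.1 hθ).1 (abs_le.1 hθ).2) (by positivity)
  have hupper : cos θ ≤ 1 - 2 * x := by
    have := cos_le_one_sub_mul_cos_sq hθ
    rwa [show 2 / π ^ 2 * θ ^ 2 = 2 * x by ring] at this
  have hlower := neg_one_le_cos θ
  calc |1 - 2 * a * (1 - cos θ)| ≤ 1 - m * x := by
        rw [abs_le]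
        constructor <;> nlinarith
    _ ≤ exp (-(m * x)) := by linarith [add_one_le_exp (-(m * x))]
    _ = exp (-(m / π ^ 2 * θ ^ 2)) := by rw [mul_div_assoc', div_mul_eq_mul_div]

theorem tendsto_sqrt_mul_integral_cos_mul_pow {a : ℝ} (ha : 0 < a) (ha' : a < 1 / 2) :
    Tendsto (fun n : ℕ => √n * ∫ θ in 0..π, cos θ * (1 - 2 * a * (1 - cos θ)) ^ n) atTop
      (𝓝 (√(π / a) / 2)) := by
  have hc : 0 < min (4 * a) (2 - 4 * a) / π ^ 2 :=
    div_pos (lt_min (by linarith) (by linarith)) (by positivity)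
  simp_rw [one_sub_two_mul_one_sub_cos_eq a]
  simpa using tendsto_sqrt_mul_integral_mul_pow pi_pos hc continuous_cos
    (by fun_prop : Continuous fun θ => a * sinc (θ / 2) ^ 2) fun θ hθ => by
      rw [← one_sub_two_mul_one_sub_cos_eq]
      exact abs_one_sub_two_mul_one_sub_cos_le ha ha'
        (abs_le.2 ⟨by linarith [hθ.1, pi_pos], hθ.2⟩)

end Laplace

/-- For `t, u > 0`, the weighted coefficients
`b_i = Σ_{2m ≤ i} m·B_{i−2m,m}·t^{i−2m}·u^m` satisfy `b_i ~ c'·i^{1/2}·(t + 2√u)^i`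
for some `c' > 0`. -/
theorem bridge_diagonal_weighted_asymptotics (t u : ℝ) (ht : 0 < t) (hu : 0 < u) :
    ∃ c' : ℝ, 0 < c' ∧
      Tendsto
        (fun i : ℕ =>
          (∑ m ∈ Finset.range (i / 2 + 1),
              (m : ℝ) * (Nat.factorial i : ℝ) /
                  ((Nat.factorial (i - 2 * m) : ℝ) * (Nat.factorial m : ℝ) *
                    (Nat.factorial m : ℝ)) *
                t ^ (i - 2 * m) * u ^ m) /
            (Real.sqrt i * (t + 2 * Real.sqrt u) ^ i))
        atTop (nhds c') := by
  set ρ := t + 2 * √u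
  have hρ : 0 < ρ := by positivity
  set a := √u / ρ
  have ha : 0 < a := by positivity
  have ha' : a < 1 / 2 := by rw [div_lt_iff₀ hρ]; linarith
  refine ⟨a / π * (√(π / a) / 2), by positivity, ?_⟩
  rw [← tendsto_add_atTop_iff_nat 1]
  refine ((tendsto_sqrt_mul_integral_cos_mul_pow ha ha').sqrt_add_one_mul.const_mul (a / π)).congr
    fun n => ?_
  change _ = weightedTrinomialSum t u (n + 1) / _
  have hsqrt : √((n : ℝ) + 1) ^ 2 = n + 1 := sq_sqrt (by positivity)
  have haρ : a * ρ = √u := div_mul_cancel₀ _ hρ.ne'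
  rw [weightedTrinomialSum_succ_eq_integral t hu.le,
    integral_cos_mul_add_two_mul_cos_pow_eq rfl haρ]
  set J := ∫ θ in 0..π, cos θ * (1 - 2 * a * (1 - cos θ)) ^ n
  push_cast
  field_simp
  rw [hsqrt, pow_succ]
  linear_combination ((n + 1) * J * ρ ^ n) * haρ
end
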